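/- arXiv:1403.0095 — 10 statements merged into one kernel-verified Lean document; each statement's English description precedes it below -/
import Mathlib

section
/- If X and Y are clans of a matrix A such that X\Y is nonempty, then Y\X is a clan of A. -/
/-- `I` is a clan of the matrix `A` indexed by `V`. -/
def IsClan {V K : Type*} (A : Matrix V V K) (I : Set V) : Prop :=
  ∀ i ∈ I, ∀ j ∈ I, ∀ x ∉ I, A x i = A x j ∧ A i x = A j x

theorem clan_sdiff {V K : Type*} [Fintype V] [Field K]
    (A : Matrix V V K) (X Y : Set V)
    (hX : IsClan A X) (hY : IsClan A Y) (hne : (X \ Y).Nonempty) :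
    IsClan A (Y \ X) := by
  obtain ⟨z, hzX, hzY⟩ := hne
  intro i hi j hj x hx
  obtain ⟨hiY, hiX⟩ := hi
  obtain ⟨hjY, hjX⟩ := hj
  by_cases hxY : x ∈ Y
  · have hxX : x ∈ X := by
      by_contra h
      exact hx ⟨hxY, h⟩
    have h1 := hX x hxX z hzX i hiX
    have h2 := hX x hxX z hzX j hjX
    have h3 := hY i hiY j hjY z hzY
    exact ⟨h1.2.trans (h3.1.trans h2.2.symm), h1.1.trans (h3.2.trans h2.1.symm)⟩
  · exact hY i hiY j hjY x hxY
end

section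
/- Let V be a finite set with |V| ≥ 4 and A = (a_{ij})_{i,j∈V} a matrix. Suppose there exist v ∈ V and nonzero scalars λ, κ ∈ K such that a_{vj} = λ and a_{jv} = κ for all j ≠ v. Then A is HL-decomposable if and only if A[V\{v}] is decomposable. -/
/-- `X` is an HL-clan of `A`: both `A[X, V\X]` and `A[V\X, X]` have rank at most 1. -/
def IsHLClan {V K : Type*} [Fintype V] [DecidableEq V] [Field K]
    (A : Matrix V V K) (X : Finset V) : Prop :=
  (A.submatrix (fun i : {a // a ∈ X} => (i : V)) (fun j : {a // a ∈ Xᶜ} => (j : V))).rank ≤ 1 ∧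
  (A.submatrix (fun i : {a // a ∈ Xᶜ} => (i : V)) (fun j : {a // a ∈ X} => (j : V))).rank ≤ 1

/-- `A` is HL-decomposable: it has a nontrivial HL-clan. -/
def HLDecomposable {V K : Type*} [Fintype V] [DecidableEq V] [Field K]
    (A : Matrix V V K) : Prop :=
  ∃ X : Finset V, 2 ≤ X.card ∧ X.card ≤ Fintype.card V - 2 ∧ IsHLClan A X

/-- `I` is a clan of the principal submatrix `A[W]`. -/
def IsClanIn {V K : Type*} [DecidableEq V] (A : Matrix V V K) (W I : Finset V) : Prop :=
  I ⊆ W ∧ ∀ i ∈ I, ∀ j ∈ I, ∀ x ∈ W \ I, A x i = A x j ∧ A i x = A j x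

/-- The principal submatrix `A[W]` is decomposable: it has a nontrivial clan. -/
def DecomposableIn {V K : Type*} [DecidableEq V] (A : Matrix V V K) (W : Finset V) : Prop :=
  ∃ I : Finset V, IsClanIn A W I ∧ I ≠ ∅ ∧ (∀ x, I ≠ {x}) ∧ I ≠ W

/-!
Off the diagonal, the row and the column of `v` are constant and nonzero. Replacing an HL-clan
by its complement if necessary, we may assume it avoids `v`. The block `A[V\X, X]` then contains
the constant row of `v`, so it has rank at most 1 exactly when each of its rows is constant;
likewise `A[X, V\X]` contains the constant column of `v`. Both conditions together say that `X`
is a clan of `A[V\{v}]`.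
-/

namespace Matrix

variable {m n K : Type*} [Fintype n] [Field K]

theorem mul_eq_mul_of_rank_le_one [Fintype m] {M : Matrix m n K} (h : M.rank ≤ 1)
    (i i' : m) (j j' : n) : M i j * M i' j' = M i' j * M i j' := by
  set N : Matrix (Fin 2) (Fin 2) K := M.submatrix ![i, i'] ![j, j']
  have hN : N.rank ≤ 1 := (rank_submatrix_le M _ _).trans h
  have hdet : N.det = 0 := by
    by_contra hne
    have hfull : N.rank = 2 := by
      simpa using rank_of_isUnit N ((isUnit_iff_isUnit_det N).2 (Ne.isUnit hne))
    omega
  have hcross : M i j * M i' j' - M i j' * M i' j = 0 := by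
    rw [← hdet, det_fin_two]
    rfl
  linear_combination hcross

theorem rank_le_one_of_forall_row_const {M : Matrix m n K} (h : ∀ i j j', M i j = M i j') :
    M.rank ≤ 1 := by
  rcases isEmpty_or_nonempty n with hn | ⟨⟨j₀⟩⟩
  · exact (rank_le_card_width M).trans (by simp)
  · have hM : M = vecMulVec (fun i => M i j₀) 1 := by
      ext i j
      simp [vecMulVec_apply, h i j j₀]
    exact hM ▸ rank_vecMulVec_le _ _

theorem rank_le_one_iff_forall_row_const_of_row_eq [Fintype m] {M : Matrix m n K} {i₀ : m}
    {c : K} (hc : c ≠ 0) (hi₀ : ∀ j, M i₀ j = c) :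
    M.rank ≤ 1 ↔ ∀ i j j', M i j = M i j' := by
  refine ⟨fun h i j j' => ?_, rank_le_one_of_forall_row_const⟩
  have hcross := mul_eq_mul_of_rank_le_one h i i₀ j j'
  rw [hi₀, hi₀, mul_comm c] at hcross
  exact mul_right_cancel₀ hc hcross

theorem rank_le_one_iff_forall_col_const_of_col_eq [Fintype m] {M : Matrix m n K} {j₀ : n}
    {c : K} (hc : c ≠ 0) (hj₀ : ∀ i, M i j₀ = c) :
    M.rank ≤ 1 ↔ ∀ i i' j, M i j = M i' j := by
  rw [← rank_transpose]
  exact rank_le_one_iff_forall_row_const_of_row_eq (M := Mᵀ) hc hj₀ |>.trans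
    ⟨fun h i i' j => h j i i', fun h j i i' => h i i' j⟩

end Matrix

section HLClan

variable {V K : Type*} [Fintype V] [DecidableEq V] [Field K] {A : Matrix V V K}

theorem isHLClan_compl_iff {X : Finset V} : IsHLClan A Xᶜ ↔ IsHLClan A X := by
  rw [IsHLClan, IsHLClan, compl_compl, and_comm]

theorem isHLClan_iff_isClanIn {v : V} {lam kap : K} (hlam : lam ≠ 0) (hkap : kap ≠ 0)
    (hrow : ∀ j, j ≠ v → A v j = lam) (hcol : ∀ j, j ≠ v → A j v = kap) {X : Finset V}
    (hv : v ∉ X) : IsHLClan A X ↔ IsClanIn A {v}ᶜ X := by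
  have hvX : v ∈ Xᶜ := Finset.mem_compl.2 hv
  have hne : ∀ i : {a // a ∈ X}, (i : V) ≠ v := fun i h => hv (h ▸ i.2)
  rw [IsHLClan, Matrix.rank_le_one_iff_forall_col_const_of_col_eq (j₀ := ⟨v, hvX⟩) hkap
      fun i : {a // a ∈ X} => hcol i (hne i),
    Matrix.rank_le_one_iff_forall_row_const_of_row_eq (i₀ := ⟨v, hvX⟩) hlam
      fun j : {a // a ∈ X} => hrow j (hne j)]
  have hcompl : ∀ x, x ∈ Xᶜ ↔ x = v ∨ x ∈ ({v}ᶜ : Finset V) \ X := by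
    intro x
    by_cases hx : x = v <;> simp [hx, hv]
  constructor
  · rintro ⟨hrows, hcols⟩
    refine ⟨fun i hi => by simpa using hne ⟨i, hi⟩, fun i hi j hj x hx => ?_⟩
    have hxX : x ∈ Xᶜ := (hcompl x).2 (Or.inr hx)
    exact ⟨hcols ⟨x, hxX⟩ ⟨i, hi⟩ ⟨j, hj⟩, hrows ⟨i, hi⟩ ⟨j, hj⟩ ⟨x, hxX⟩⟩
  · rintro ⟨-, hclan⟩
    refine ⟨fun i j x => ?_, fun x i j => ?_⟩ <;> simp only [Matrix.submatrix_apply]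
    · rcases (hcompl x).1 x.2 with hxv | hx
      · rw [hxv, hcol i (hne i), hcol j (hne j)]
      · exact (hclan i i.2 j j.2 x hx).2
    · rcases (hcompl x).1 x.2 with hxv | hx
      · rw [hxv, hrow i (hne i), hrow j (hne j)]
      · exact (hclan i i.2 j j.2 x hx).1

end HLClan

theorem decomposableIn_iff_exists_card {V K : Type*} [DecidableEq V] {A : Matrix V V K}
    {W : Finset V} :
    DecomposableIn A W ↔ ∃ I, IsClanIn A W I ∧ 2 ≤ I.card ∧ I.card < W.card := by
  refine exists_congr fun I => and_congr_right fun hI => ?_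
  have hW : I ≠ W ↔ I.card < W.card :=
    ⟨fun h => Finset.card_lt_card (Finset.ssubset_iff_subset_ne.2 ⟨hI.1, h⟩),
      fun h hIW => h.ne (congrArg Finset.card hIW)⟩
  have hsingle : (∀ x, I ≠ {x}) ↔ I.card ≠ 1 := by simp [Finset.card_eq_one]
  have hempty : I ≠ ∅ ↔ I.card ≠ 0 :=
    (Finset.card_ne_zero.trans Finset.nonempty_iff_ne_empty).symm
  rw [hempty, hsingle, hW]
  omega

theorem hlDecomposable_iff_exists_notMem {V K : Type*} [Fintype V] [DecidableEq V] [Field K]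
    {A : Matrix V V K} (v : V) :
    HLDecomposable A ↔
      ∃ X, v ∉ X ∧ 2 ≤ X.card ∧ X.card ≤ Fintype.card V - 2 ∧ IsHLClan A X := by
  refine ⟨fun ⟨X, h2, hle, hX⟩ => ?_, fun ⟨X, _, hX⟩ => ⟨X, hX⟩⟩
  by_cases hv : v ∈ X
  · have hcard := Finset.card_compl X
    exact ⟨Xᶜ, Finset.notMem_compl.2 hv, by omega, by omega, isHLClan_compl_iff.2 hX⟩
  · exact ⟨X, hv, h2, hle, hX⟩

theorem hldecomposable_iff_decomposable_general {V K : Type*} [Fintype V] [DecidableEq V] [Field K]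
    (A : Matrix V V K) (v : V) (lam kap : K)
    (hlam : lam ≠ 0) (hkap : kap ≠ 0)
    (hrow : ∀ j, j ≠ v → A v j = lam) (hcol : ∀ j, j ≠ v → A j v = kap) :
    HLDecomposable A ↔ DecomposableIn A ({v}ᶜ) := by
  rw [hlDecomposable_iff_exists_notMem v, decomposableIn_iff_exists_card, Finset.card_compl,
    Finset.card_singleton]
  refine exists_congr fun X => ⟨?_, ?_⟩
  · rintro ⟨hv, h2, hle, hX⟩
    exact ⟨(isHLClan_iff_isClanIn hlam hkap hrow hcol hv).1 hX, h2, by omega⟩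
  · rintro ⟨hX, h2, hlt⟩
    have hv : v ∉ X := fun h => by simpa using hX.1 h
    exact ⟨hv, h2, by omega, (isHLClan_iff_isClanIn hlam hkap hrow hcol hv).2 hX⟩

theorem hldecomposable_iff_decomposable {V K : Type*} [Fintype V] [DecidableEq V] [Field K]
    (A : Matrix V V K) (hcard : 4 ≤ Fintype.card V) (v : V) (lam kap : K)
    (hlam : lam ≠ 0) (hkap : kap ≠ 0)
    (hrow : ∀ j, j ≠ v → A v j = lam) (hcol : ∀ j, j ≠ v → A j v = kap) :
    HLDecomposable A ↔ DecomposableIn A ({v}ᶜ) :=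
  hldecomposable_iff_decomposable_general A v lam kap hlam hkap hrow hcol
end

section
/- Let A be a matrix indexed by a finite set V and D a nonsingular diagonal matrix indexed by V. Then a subset X ⊆ V is an HL-clan of A if and only if it is an HL-clan of DAD. In particular, A is HL-indecomposable if and only if DAD is HL-indecomposable. -/
/-- `A` is HL-indecomposable: all its HL-clans are trivial. -/
def HLIndecomposable {V K : Type*} [Fintype V] [DecidableEq V] [Field K]
    (A : Matrix V V K) : Prop :=
  ∀ X : Finset V, IsHLClan A X →
    X = ∅ ∨ X = Finset.univ ∨ (∃ x, X = {x}) ∨ (∃ x, X = {x}ᶜ)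

lemma rank_DAD_submatrix {V K : Type*} [Fintype V] [DecidableEq V] [Field K]
    {m n : Type*} [Fintype m] [Fintype n] [DecidableEq m] [DecidableEq n]
    (A : Matrix V V K) (d : V → K) (hd : ∀ i, d i ≠ 0) (f : m → V) (g : n → V) :
    ((Matrix.diagonal d * A * Matrix.diagonal d).submatrix f g).rank
      = (A.submatrix f g).rank := by
  have h : (Matrix.diagonal d * A * Matrix.diagonal d).submatrix f g
      = Matrix.diagonal (d ∘ f) * A.submatrix f g * Matrix.diagonal (d ∘ g) := by
    ext i j
    simp [Matrix.mul_apply, Matrix.diagonal_apply, Finset.sum_ite_eq, Finset.sum_ite_eq',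
      Matrix.submatrix_apply]
  rw [h, Matrix.rank_mul_eq_left_of_isUnit_det, Matrix.rank_mul_eq_right_of_isUnit_det]
  · rw [Matrix.det_diagonal]
    exact (Finset.prod_ne_zero_iff.mpr fun i _ => hd (f i)).isUnit
  · rw [Matrix.det_diagonal]
    exact (Finset.prod_ne_zero_iff.mpr fun j _ => hd (g j)).isUnit

theorem hlclan_diagonal_similarity {V K : Type*} [Fintype V] [DecidableEq V] [Field K]
    (A : Matrix V V K) (d : V → K) (hd : ∀ i, d i ≠ 0) :
    (∀ X : Finset V,
        IsHLClan A X ↔ IsHLClan (Matrix.diagonal d * A * Matrix.diagonal d) X) ∧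
      (HLIndecomposable A ↔ HLIndecomposable (Matrix.diagonal d * A * Matrix.diagonal d)) := by
  have key : ∀ X : Finset V,
      IsHLClan A X ↔ IsHLClan (Matrix.diagonal d * A * Matrix.diagonal d) X := by
    intro X
    unfold IsHLClan
    rw [rank_DAD_submatrix A d hd, rank_DAD_submatrix A d hd]
  refine ⟨key, ?_⟩
  constructor
  · intro h X hX
    exact h X ((key X).mpr hX)
  · intro h X hX
    exact h X ((key X).mp hX)
end

section
/- Let A be a separable matrix indexed by V and {X, Y} a clan-partition of A. If there exists x ∈ X such that A[V\{x}] is inseparable, then X = {x} and Y = V\{x}. -/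
/-- The principal submatrix `A[W]` is separable: `W` splits into two nonempty clans of `A[W]`. -/
def SeparableIn {V K : Type*} [DecidableEq V] (A : Matrix V V K) (W : Finset V) : Prop :=
  ∃ I : Finset V, I ⊆ W ∧ I.Nonempty ∧ (W \ I).Nonempty ∧
    IsClanIn A W I ∧ IsClanIn A W (W \ I)

theorem clan_partition_inseparable {V K : Type*} [Fintype V] [DecidableEq V] [Field K]
    (A : Matrix V V K) (X Y : Finset V)
    (hpart : X ∪ Y = Finset.univ) (hdisj : Disjoint X Y)
    (hXne : X.Nonempty) (hYne : Y.Nonempty)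
    (hX : IsClanIn A Finset.univ X) (hY : IsClanIn A Finset.univ Y)
    (x : V) (hx : x ∈ X) (hins : ¬ SeparableIn A ({x}ᶜ)) :
    X = {x} ∧ Y = {x}ᶜ := by
  have hmemY : ∀ v, v ∈ Y ↔ v ∉ X := by
    intro v
    constructor
    · intro hv hvX
      exact (Finset.disjoint_left.mp hdisj) hvX hv
    · intro hv
      have : v ∈ X ∪ Y := hpart ▸ Finset.mem_univ v
      rcases Finset.mem_union.mp this with h | h
      · exact absurd h hv
      · exact h
  have hXeq : X = {x} := by
    by_contra h
    obtain ⟨x', hx', hne⟩ : ∃ x' ∈ X, x' ≠ x := by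
      by_contra hc
      push_neg at hc
      exact h (Finset.eq_singleton_iff_unique_mem.mpr ⟨hx, hc⟩)
    apply hins
    have hWeq : ({x}ᶜ : Finset V) \ (X \ {x}) = Y := by
      ext v
      simp only [Finset.mem_sdiff, Finset.mem_compl, Finset.mem_singleton, hmemY]
      constructor
      · rintro ⟨hvx, hv⟩ hvX
        exact hvx (by_contra fun hh => hv ⟨hvX, hh⟩)
      · intro hv
        refine ⟨fun hh => hv (hh ▸ hx), fun hh => hv hh.1⟩
    refine ⟨X \ {x}, ?_, ⟨x', Finset.mem_sdiff.mpr ⟨hx', by simpa using hne⟩⟩, ?_, ?_, ?_⟩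
    · intro v hv
      simp only [Finset.mem_sdiff, Finset.mem_singleton] at hv
      simpa using hv.2
    · rw [hWeq]; exact hYne
    · refine ⟨?_, ?_⟩
      · intro v hv
        simp only [Finset.mem_sdiff, Finset.mem_singleton] at hv
        simpa using hv.2
      · intro i hi j hj z hz
        rw [hWeq] at hz
        have hzX : z ∉ X := (hmemY z).mp hz
        exact hX.2 i (Finset.mem_sdiff.mp hi).1 j (Finset.mem_sdiff.mp hj).1 z
          (Finset.mem_sdiff.mpr ⟨Finset.mem_univ z, hzX⟩)
    · rw [hWeq]
      refine ⟨?_, ?_⟩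
      · intro v hv
        simp only [Finset.mem_compl, Finset.mem_singleton]
        intro hh
        exact (hmemY v).mp hv (hh ▸ hx)
      · intro i hi j hj z hz
        simp only [Finset.mem_sdiff, Finset.mem_compl, Finset.mem_singleton] at hz
        exact hY.2 i hi j hj z (Finset.mem_sdiff.mpr ⟨Finset.mem_univ z, hz.2⟩)
  refine ⟨hXeq, ?_⟩
  ext v
  simp only [Finset.mem_compl, Finset.mem_singleton, hmemY, hXeq]
end

section
/- Let V be a finite set of size n ≥ 5 and A = (a_{ij})_{i,j∈V} an inseparable skew-symmetric matrix over a field of characteristic ≠ 2. Then there exists x ∈ V such that A[V\{x}] is inseparable. -/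
open Matrix

/-!
For a skew-symmetric matrix, a bipartition of `W` into two clans is a split: a bipartition
`S, W \ S` with constant block `A[S, W \ S] = c`. Suppose `A` has no split while every
`A[{x}ᶜ]` has one. A split of some `A[{x}ᶜ]` with smallest source `S` has `|S| = 1`: otherwise,
take `y ∈ S` and a split of `A[{y}ᶜ]` whose source `P` contains `x`; either the target of `P`
lies in `S \ {y}`, or some vertex lies outside `S ∪ P`, and comparing the two blocks there
forces `S ∩ P = ∅` and opposite values, so that `S \ {y}` splits `A[{y}ᶜ]`. Hence some `y` is
pendant at some `x`: row `y` is constant, say `c`, off the entries `y` and `x`. Using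
`|V| ≥ 5`, `x` is not pendant at a vertex other than `y`, and then every `A[{z}ᶜ]` with `z ≠ y`
has a split of value `c` whose source contains `y`. Choose `z` for which the union of the
targets of these splits is smallest; a vertex `b` of it with `A z b ≠ c` yields either a smaller
union at `b` or a split of `A`.
-/

section

open Finset

variable {V K : Type*} [DecidableEq V]

structure IsSplit (A : Matrix V V K) (W S : Finset V) (c : K) : Prop where
  subset : S ⊆ W
  nonempty : S.Nonempty
  sdiff_nonempty : (W \ S).Nonempty
  apply_eq : ∀ s ∈ S, ∀ t ∈ W \ S, A s t = c

section Split

variable [Neg K] {A : Matrix V V K} {W S : Finset V} {c : K} {x y s t : V}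

theorem separableIn_iff_exists_isSplit (hA : ∀ i j, A i j = -A j i) :
    SeparableIn A W ↔ ∃ S c, IsSplit A W S c := by
  constructor
  · rintro ⟨I, hIW, ⟨i₀, hi₀⟩, ⟨j₀, hj₀⟩, hI, hJ⟩
    refine ⟨I, A i₀ j₀, ⟨hIW, ⟨i₀, hi₀⟩, ⟨j₀, hj₀⟩, fun i hi t ht => ?_⟩⟩
    have hi' : i ∈ W \ (W \ I) := by rwa [Finset.sdiff_sdiff_eq_self hIW]
    rw [(hJ.2 t ht j₀ hj₀ i hi').1, (hI.2 i hi i₀ hi₀ j₀ hj₀).2]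
  · rintro ⟨S, c, hSW, hS, hWS, h⟩
    refine ⟨S, hSW, hS, hWS, ⟨hSW, fun i hi j hj t ht => ?_⟩,
      ⟨sdiff_subset, fun i hi j hj t ht => ?_⟩⟩
    · rw [hA t i, hA t j, h i hi t ht, h j hj t ht]
      exact ⟨rfl, rfl⟩
    · rw [Finset.sdiff_sdiff_eq_self hSW] at ht
      rw [hA i t, hA j t, h t ht i hi, h t ht j hj]
      exact ⟨rfl, rfl⟩

theorem IsSplit.sdiff (hA : ∀ i j, A i j = -A j i) (h : IsSplit A W S c) :
    IsSplit A W (W \ S) (-c) := by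
  refine ⟨sdiff_subset, h.sdiff_nonempty, ?_, fun s hs t ht => ?_⟩
  · rw [Finset.sdiff_sdiff_eq_self h.subset]
    exact h.nonempty
  · rw [Finset.sdiff_sdiff_eq_self h.subset] at ht
    rw [hA, h.apply_eq t ht s hs]

theorem IsSplit.exists_mem (hA : ∀ i j, A i j = -A j i) (h : IsSplit A W S c) (hy : y ∈ W) :
    ∃ S' c', IsSplit A W S' c' ∧ y ∈ S' := by
  by_cases hyS : y ∈ S
  · exact ⟨S, c, h, hyS⟩
  · exact ⟨W \ S, -c, h.sdiff hA, mem_sdiff.2 ⟨hy, hyS⟩⟩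

end Split

section Deletion

variable [Fintype V] {A : Matrix V V K} {G S : Finset V} {c f : K} {x y z s t : V}

theorem IsSplit.ne_of_mem (h : IsSplit A {x}ᶜ S c) (hs : s ∈ S) : s ≠ x := by
  simpa using h.subset hs

theorem IsSplit.exists_notMem (h : IsSplit A {x}ᶜ S c) : ∃ t, t ≠ x ∧ t ∉ S := by
  obtain ⟨t, ht⟩ := h.sdiff_nonempty
  exact ⟨t, by simpa using ht⟩

theorem IsSplit.apply_of_ne (h : IsSplit A {x}ᶜ S c) (hs : s ∈ S) (htx : t ≠ x) (ht : t ∉ S) :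
    A s t = c :=
  h.apply_eq s hs t (by simp [htx, ht])

def IsPendant (A : Matrix V V K) (y x : V) (c : K) : Prop :=
  ∀ v, v ≠ y → v ≠ x → A y v = c

theorem IsSplit.isPendant (h : IsSplit A {x}ᶜ {s} c) : IsPendant A s x c :=
  fun v hvs hvx => h.apply_of_ne (mem_singleton_self s) hvx (by simpa using hvs)

theorem IsPendant.eq_of_isSplit (hp : IsPendant A y x c) (hG : IsSplit A {z}ᶜ G f) (hyG : y ∈ G)
    (hxG : x ∈ G ∨ x = z) : f = c := by
  obtain ⟨t, htz, htG⟩ := hG.exists_notMem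
  have htx : t ≠ x := by
    rintro rfl
    exact hxG.elim htG htz
  rw [← hG.apply_of_ne hyG htz htG, hp t (ne_of_mem_of_not_mem hyG htG).symm htx]

end Deletion

/-- `U` is the target side of a split of `A[{z}ᶜ]` with value `c` whose source side contains `y`. -/
structure IsSink (A : Matrix V V K) (y z : V) (c : K) (U : Finset V) : Prop where
  nonempty : U.Nonempty
  left_notMem : y ∉ U
  right_notMem : z ∉ U
  apply_eq : ∀ u ∈ U, ∀ v ∉ U, v ≠ z → A v u = c

theorem IsSink.union_erase {A : Matrix V V K} {y z b : V} {c : K} {U₁ U₂ : Finset V}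
    (h₁ : IsSink A y z c U₁) (hb : b ∈ U₁) (h₂ : IsSink A y b c U₂) :
    IsSink A y z c (U₁ ∪ U₂.erase z) where
  nonempty := h₁.nonempty.mono subset_union_left
  left_notMem := by simp [h₁.left_notMem, h₂.left_notMem]
  right_notMem := by simp [h₁.right_notMem]
  apply_eq u hu v hv hvz := by
    simp only [mem_union, mem_erase, not_or, not_and] at hu hv
    rcases hu with hu | ⟨-, hu⟩
    · exact h₁.apply_eq u hu v hv.1 hvz
    · exact h₂.apply_eq u hu v (hv.2 hvz) (ne_of_mem_of_not_mem hb hv.1).symm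

section Sink

variable [Fintype V] {A : Matrix V V K} {y z u : V} {c : K} {G U : Finset V}

theorem IsSplit.isSink (hG : IsSplit A {z}ᶜ G c) (hyG : y ∈ G) : IsSink A y z c ({z}ᶜ \ G) where
  nonempty := hG.sdiff_nonempty
  left_notMem := by simp [hyG]
  right_notMem := by simp
  apply_eq u hu v hv hvz := hG.apply_eq v (by simpa [hvz] using hv) u hu

open Classical in
noncomputable def maxSink (A : Matrix V V K) (y z : V) (c : K) : Finset V :=
  univ.filter fun u => ∃ U, IsSink A y z c U ∧ u ∈ U

theorem mem_maxSink : u ∈ maxSink A y z c ↔ ∃ U, IsSink A y z c U ∧ u ∈ U := by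
  simp [maxSink]

theorem IsSink.subset_maxSink (h : IsSink A y z c U) : U ⊆ maxSink A y z c :=
  fun _ hu => mem_maxSink.2 ⟨U, h, hu⟩

theorem IsSink.maxSink (h : IsSink A y z c U) : IsSink A y z c (maxSink A y z c) where
  nonempty := h.nonempty.mono h.subset_maxSink
  left_notMem hy := by
    obtain ⟨U', h', hy'⟩ := mem_maxSink.1 hy
    exact h'.left_notMem hy'
  right_notMem hz := by
    obtain ⟨U', h', hz'⟩ := mem_maxSink.1 hz
    exact h'.right_notMem hz'
  apply_eq u hu v hv hvz := by
    obtain ⟨U', h', hu'⟩ := mem_maxSink.1 hu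
    exact h'.apply_eq u hu' v (fun hv' => hv (h'.subset_maxSink hv')) hvz

end Sink

theorem one_lt_card_compl_triple [Fintype V] (hcard : 5 ≤ Fintype.card V) (a b c : V) :
    1 < ({a, b, c}ᶜ : Finset V).card := by
  rw [card_compl]
  have := card_le_three (a := a) (b := b) (c := c)
  omega

/-- An inseparable skew-symmetric matrix all of whose one-vertex deletions are separable, in terms
of splits (see `separableIn_iff_exists_isSplit`). -/
structure IsCritical [Fintype V] [Neg K] (A : Matrix V V K) : Prop where
  skew : ∀ i j, A i j = -A j i
  not_isSplit : ∀ S c, ¬ IsSplit A univ S c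
  exists_isSplit : ∀ x, ∃ S c, IsSplit A {x}ᶜ S c

namespace IsCritical

section Neg

variable [Fintype V] [Neg K] {A : Matrix V V K} {S P G U : Finset V} {c d e f : K}
  {b q s t u v w x y z : V}

theorem false_of_forall_eq (hA : IsCritical A) (S : Finset V) (c : K) (hs : s ∈ S) (ht : t ∉ S)
    (h : ∀ s ∈ S, ∀ t ∉ S, A s t = c) : False :=
  hA.not_isSplit S c ⟨subset_univ S, ⟨s, hs⟩, ⟨t, by simpa using ht⟩,
    fun s hs t ht => h s hs t (by simpa using ht)⟩

theorem exists_ne (hA : IsCritical A) (y : V) : ∃ z, z ≠ y := by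
  obtain ⟨S, c, h⟩ := hA.exists_isSplit y
  obtain ⟨z, hz⟩ := h.nonempty
  exact ⟨z, h.ne_of_mem hz⟩

theorem exists_isSplit_mem (hA : IsCritical A) (hyx : y ≠ x) :
    ∃ S c, IsSplit A {x}ᶜ S c ∧ y ∈ S := by
  obtain ⟨S, c, h⟩ := hA.exists_isSplit x
  exact h.exists_mem hA.skew (by simpa using hyx)

theorem false_of_row_eq (hA : IsCritical A) (h : ∀ v, v ≠ y → A y v = c) : False := by
  obtain ⟨z, hz⟩ := hA.exists_ne y
  refine hA.false_of_forall_eq {y} c (mem_singleton_self y) (by simpa using hz) fun s hs t ht => ?_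
  rw [mem_singleton] at hs ht
  exact hs ▸ h t ht

theorem false_of_col_eq (hA : IsCritical A) (h : ∀ v, v ≠ y → A v y = c) : False :=
  hA.false_of_row_eq (c := -c) fun v hv => by rw [hA.skew, h v hv]

theorem apply_ne_of_isPendant (hA : IsCritical A) (hp : IsPendant A y x c) : A y x ≠ c :=
  fun hc => hA.false_of_row_eq fun v hvy => by
    by_cases hvx : v = x
    · exact hvx ▸ hc
    · exact hp v hvy hvx

theorem eq_of_isPendant (hA : IsCritical A) (hw : IsPendant A x w d) (hu : IsPendant A x u e)
    (hxw : x ≠ w) (hvx : v ≠ x) (hvw : v ≠ w) (hvu : v ≠ u) : w = u := by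
  by_contra hwu
  refine hA.apply_ne_of_isPendant hw ?_
  rw [hu w hxw.symm hwu, ← hu v hvx hvu, hw v hvx hvw]

/-- If `y` is pendant at `x`, a split of `A[{z}ᶜ]` whose source contains `y` but not `x` must have
target `{x}`, which makes `x` pendant at `z`. -/
theorem mem_of_isPendant (hA : IsCritical A) (hp : IsPendant A y x c) (hG : IsSplit A {z}ᶜ G f)
    (hyG : y ∈ G) (hxz : x ≠ z) (hnp : ∀ e, ¬ IsPendant A x z e) : x ∈ G := by
  by_contra hxG
  have hyx : A y x = f := hG.apply_of_ne hyG hxz hxG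
  by_cases ht : ∃ t, t ≠ z ∧ t ∉ G ∧ t ≠ x
  · obtain ⟨t, htz, htG, htx⟩ := ht
    refine hA.apply_ne_of_isPendant hp ?_
    rw [hyx, ← hG.apply_of_ne hyG htz htG, hp t (ne_of_mem_of_not_mem hyG htG).symm htx]
  · push Not at ht
    refine hnp (-f) fun v hvx hvz => ?_
    have hvG : v ∈ G := by_contra fun hvG => hvx (ht v hvz hvG)
    rw [hA.skew, hG.apply_of_ne hvG hxz hxG]

theorem apply_eq_of_isPendant_of_isPendant (hA : IsCritical A) (hy : IsPendant A y x c)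
    (hx : IsPendant A x w d) (hyx : y ≠ x) (hxw : x ≠ w) (hwy : w ≠ y) (hcd : c ≠ d)
    (hux : u ≠ x) (huy : u ≠ y) (huw : u ≠ w) (hvu : v ≠ u) (hvw : v ≠ w) : A v w = c := by
  obtain ⟨M, e, hM, hyM⟩ := hA.exists_isSplit_mem huy.symm
  have hxM : x ∈ M := hA.mem_of_isPendant hy hM hyM hux.symm fun e hxu =>
    huw (hA.eq_of_isPendant hx hxu hxw hyx hwy.symm huy.symm).symm
  have hec : e = c := hy.eq_of_isSplit hM hyM (Or.inl hxM)
  have hT : ∀ t, t ≠ u → t ∉ M → t = w := fun t htu htM => by_contra fun htw => hcd <| by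
    rw [← hec, ← hM.apply_of_ne hxM htu htM, hx t (ne_of_mem_of_not_mem hxM htM).symm htw]
  obtain ⟨t₁, ht₁u, ht₁M⟩ := hM.exists_notMem
  have hwM : w ∉ M := hT t₁ ht₁u ht₁M ▸ ht₁M
  have hvM : v ∈ M := by_contra fun hvM => hvw (hT v hvu hvM)
  rw [hM.apply_of_ne hvM huw.symm hwM, hec]

theorem false_of_isPendant_of_isPendant_of_ne (hA : IsCritical A) (hcard : 5 ≤ Fintype.card V)
    (hy : IsPendant A y x c) (hx : IsPendant A x w d) (hyx : y ≠ x) (hxw : x ≠ w) (hwy : w ≠ y)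
    (hcd : c ≠ d) : False := by
  obtain ⟨u₁, hu₁, u₂, hu₂, hu⟩ := one_lt_card.1 (one_lt_card_compl_triple hcard x y w)
  simp only [mem_compl, mem_insert, mem_singleton, not_or] at hu₁ hu₂
  refine hA.false_of_col_eq (y := w) (c := c) fun m hmw => ?_
  by_cases hm : m = u₁
  · exact hA.apply_eq_of_isPendant_of_isPendant hy hx hyx hxw hwy hcd hu₂.1 hu₂.2.1 hu₂.2.2
      (hm ▸ hu) hmw
  · exact hA.apply_eq_of_isPendant_of_isPendant hy hx hyx hxw hwy hcd hu₁.1 hu₁.2.1 hu₁.2.2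
      hm hmw

theorem exists_isPendant_of_isPendant_of_isPendant (hA : IsCritical A) (hy : IsPendant A y x c)
    (hx : IsPendant A x w c) (hyx : y ≠ x) (hwy : w ≠ y) : ∃ e, IsPendant A w y e := by
  obtain ⟨G, g, hG, hxG⟩ := hA.exists_isSplit_mem hyx.symm
  have hwG : w ∉ G := by
    intro hwG
    have hgc : g = c := hx.eq_of_isSplit hG hxG (Or.inl hwG)
    obtain ⟨t, hty, htG⟩ := hG.exists_notMem
    refine hA.false_of_forall_eq (insert y G) c (mem_insert_self y G) (t := t)
      (by simp [hty, htG]) fun s hs t ht => ?_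
    rw [mem_insert, not_or] at ht
    rcases mem_insert.1 hs with rfl | hs
    · exact hy t ht.1 fun htx => ht.2 (htx ▸ hxG)
    · rw [hG.apply_of_ne hs ht.1 ht.2, hgc]
  have hT : ∀ t, t ≠ y → t ∉ G → t = w := fun t hty htG => by_contra fun htw =>
    hA.apply_ne_of_isPendant hx <| by
      rw [hG.apply_of_ne hxG hwy hwG, ← hG.apply_of_ne hxG hty htG,
        hx t (ne_of_mem_of_not_mem hxG htG).symm htw]
  refine ⟨-g, fun v hvw hvy => ?_⟩
  have hvG : v ∈ G := by_contra fun hvG => hvw (hT v hvy hvG)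
  rw [hA.skew, hG.apply_of_ne hvG hwy hwG]

theorem false_of_isPendant_of_isPendant (hA : IsCritical A) (hcard : 5 ≤ Fintype.card V)
    (hy : IsPendant A y x c) (hx : IsPendant A x w d) (hyx : y ≠ x) (hxw : x ≠ w) (hwy : w ≠ y) :
    False := by
  obtain rfl | hcd := eq_or_ne c d
  · obtain ⟨e, hw⟩ := hA.exists_isPendant_of_isPendant_of_isPendant hy hx hyx hwy
    obtain rfl | hce := eq_or_ne c e
    · obtain ⟨u, hu, -⟩ := one_lt_card.1 (one_lt_card_compl_triple hcard x y w)
      refine hA.false_of_forall_eq {x, y, w} c (mem_insert_self _ _) (mem_compl.1 hu)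
        fun s hs t ht => ?_
      simp only [mem_insert, mem_singleton, not_or] at hs ht
      rcases hs with rfl | rfl | rfl
      exacts [hx t ht.1 ht.2.2, hy t ht.2.1 ht.1, hw t ht.2.2 ht.2.1]
    · exact hA.false_of_isPendant_of_isPendant_of_ne hcard hx hw hxw hwy hyx hce
  · exact hA.false_of_isPendant_of_isPendant_of_ne hcard hy hx hyx hxw hwy hcd

theorem exists_isSink_of_isPendant (hA : IsCritical A) (hcard : 5 ≤ Fintype.card V)
    (hp : IsPendant A y x c) (hyx : y ≠ x) (hzy : z ≠ y) : ∃ U, IsSink A y z c U := by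
  obtain ⟨G, f, hG, hyG⟩ := hA.exists_isSplit_mem hzy.symm
  have hxG : x ∈ G ∨ x = z := or_iff_not_imp_right.2 fun hxz =>
    hA.mem_of_isPendant hp hG hyG hxz fun e hx =>
      hA.false_of_isPendant_of_isPendant hcard hp hx hyx hxz hzy
  exact ⟨_, hp.eq_of_isSplit hG hyG hxG ▸ hG.isSink hyG⟩

theorem exists_apply_ne_of_isSink (hA : IsCritical A) (hU : IsSink A y z c U) :
    ∃ b ∈ U, A z b ≠ c := by
  by_contra! hb
  obtain ⟨u, hu⟩ := hU.nonempty
  refine hA.false_of_forall_eq Uᶜ c (mem_compl.2 hU.left_notMem) (by simpa using hu)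
    fun s hs t ht => ?_
  rw [mem_compl, not_not] at ht
  by_cases hsz : s = z
  · exact hsz ▸ hb t ht
  · exact hU.apply_eq t ht s (mem_compl.1 hs) hsz

theorem false_of_forall_exists_isSink (hA : IsCritical A)
    (h : ∀ z, z ≠ y → ∃ U, IsSink A y z c U) : False := by
  have hsink : ∀ z, z ≠ y → IsSink A y z c (maxSink A y z c) :=
    fun z hz => (h z hz).choose_spec.maxSink
  obtain ⟨z₀, hz₀⟩ := hA.exists_ne y
  obtain ⟨z, hzy, hmin⟩ := exists_min_image (univ.filter (· ≠ y))
    (fun z => (maxSink A y z c).card) ⟨z₀, by simpa using hz₀⟩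
  rw [mem_filter] at hzy
  have hN := hsink z hzy.2
  obtain ⟨b, hbN, hzb⟩ := hA.exists_apply_ne_of_isSink hN
  have hby : b ≠ y := ne_of_mem_of_not_mem hbN hN.left_notMem
  have hN' := hsink b hby
  have hsub : (maxSink A y b c).erase z ⊆ maxSink A y z c :=
    subset_union_right.trans (hN.union_erase hbN hN').subset_maxSink
  by_cases hzN' : z ∈ maxSink A y b c
  · refine hA.false_of_forall_eq (insert z (maxSink A y z c))ᶜ c (s := y)
      (by simp [hzy.2.symm, hN.left_notMem]) (t := z) (by simp) fun s hs t ht => ?_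
    simp only [mem_compl, mem_insert, not_or] at hs
    simp only [mem_compl, not_not, mem_insert] at ht
    rcases ht with rfl | ht
    · exact hN'.apply_eq t hzN' s (fun hs' => hs.2 (hsub (mem_erase.2 ⟨hs.1, hs'⟩)))
        (ne_of_mem_of_not_mem hbN hs.2).symm
    · exact hN.apply_eq t ht s hs.2 hs.1
  · have hsub' : maxSink A y b c ⊆ maxSink A y z c := fun u hu =>
      hsub (mem_erase.2 ⟨ne_of_mem_of_not_mem hu hzN', hu⟩)
    have hlt := card_lt_card ((ssubset_iff_of_subset hsub').2 ⟨b, hbN, hN'.right_notMem⟩)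
    have := hmin b (by simp [hby])
    omega

theorem false_of_isPendant (hA : IsCritical A) (hcard : 5 ≤ Fintype.card V)
    (hp : IsPendant A y x c) (hyx : y ≠ x) : False :=
  hA.false_of_forall_exists_isSink fun _ hzy => hA.exists_isSink_of_isPendant hcard hp hyx hzy

end Neg

section InvolutiveNeg

variable [Fintype V] [InvolutiveNeg K] {A : Matrix V V K} {S P : Finset V} {c d : K} {b q x y z : V}

theorem union_eq_univ (hA : IsCritical A) (hS : IsSplit A {x}ᶜ S c) (hy : y ∈ S)
    (hP : IsSplit A {y}ᶜ P c) (hx : x ∈ P) : S ∪ P = univ := by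
  by_contra hSP
  obtain ⟨u, hu⟩ : ∃ u, u ∉ S ∪ P := by simpa [eq_univ_iff_forall] using hSP
  refine hA.false_of_forall_eq (S ∪ P) c (mem_union_left _ hy) hu fun s hs t ht => ?_
  rw [mem_union, not_or] at ht
  rcases mem_union.1 hs with hs | hs
  · exact hS.apply_of_ne hs (fun h => ht.2 (h ▸ hx)) ht.1
  · exact hP.apply_of_ne hs (fun h => ht.1 (h ▸ hy)) ht.2

theorem isSplit_erase (hA : IsCritical A) (hS : IsSplit A {x}ᶜ S c) (hy : y ∈ S)
    (hP : IsSplit A {y}ᶜ P d) (hx : x ∈ P) (hb : b ∈ S) (hby : b ≠ y) (hq : q ∈ P) (hqx : q ≠ x)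
    (hz : z ∉ S ∪ P) : IsSplit A {y}ᶜ (S.erase y) c := by
  rw [mem_union, not_or] at hz
  have hcd : c ≠ d := by
    rintro rfl
    exact hz.1 (((mem_union.1 (hA.union_eq_univ hS hy hP hx ▸ mem_univ z)).resolve_right hz.2))
  have hdisj : ∀ a ∈ S, a ∉ P := fun a haS haP => hcd <| by
    rw [← hS.apply_of_ne haS (ne_of_mem_of_not_mem hx hz.2).symm hz.1,
      hP.apply_of_ne haP (ne_of_mem_of_not_mem hy hz.1).symm hz.2]
  have hdc : d = -c := by
    rw [← hP.apply_of_ne hq hby (hdisj b hb), hA.skew,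
      hS.apply_of_ne hb hqx fun hqS => hdisj q hqS hq]
  refine ⟨fun s hs => by simpa using (mem_erase.1 hs).1, ⟨b, mem_erase.2 ⟨hby, hb⟩⟩,
    ⟨x, by simpa [hP.ne_of_mem hx] using fun h => hdisj x h hx⟩, fun s hs t ht => ?_⟩
  rw [mem_erase] at hs
  simp only [mem_sdiff, mem_compl, mem_singleton, mem_erase, not_and] at ht
  by_cases htP : t ∈ P
  · rw [hA.skew, hP.apply_of_ne htP hs.1 (hdisj s hs.2), hdc, neg_neg]
  · exact hS.apply_of_ne hs.2 (ne_of_mem_of_not_mem hx htP).symm (ht.2 ht.1)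

theorem exists_isSplit_card_lt (hA : IsCritical A) (hnp : ∀ y x c, y ≠ x → ¬ IsPendant A y x c)
    (hS : IsSplit A {x}ᶜ S c) : ∃ y P d, IsSplit A {y}ᶜ P d ∧ P.card < S.card := by
  have hS1 : 1 < S.card := lt_of_le_of_ne (card_pos.2 hS.nonempty) fun h => by
    obtain ⟨s, rfl⟩ := card_eq_one.1 h.symm
    exact hnp s x c (hS.ne_of_mem (mem_singleton_self s)) hS.isPendant
  obtain ⟨y, hy⟩ := hS.nonempty
  obtain ⟨P, d, hP, hx⟩ := hA.exists_isSplit_mem (hS.ne_of_mem hy).symm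
  by_cases hPS : P.card < S.card
  · exact ⟨y, P, d, hP, hPS⟩
  by_cases hSP : S ∪ P = univ
  · refine ⟨y, {y}ᶜ \ P, -d, hP.sdiff hA.skew,
      card_lt_card ((ssubset_iff_of_subset fun u hu => ?_).2 ⟨y, hy, by simp⟩)⟩
    rw [mem_sdiff] at hu
    exact (mem_union.1 (eq_univ_iff_forall.1 hSP u)).resolve_right hu.2
  · obtain ⟨z, hz⟩ : ∃ z, z ∉ S ∪ P := by simpa [eq_univ_iff_forall] using hSP
    obtain ⟨b, hb, hby⟩ := exists_mem_ne hS1 y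
    obtain ⟨q, hq, hqx⟩ := exists_mem_ne (by omega : 1 < P.card) x
    exact ⟨y, S.erase y, c, hA.isSplit_erase hS hy hP hx hb hby hq hqx hz, card_erase_lt_of_mem hy⟩

theorem exists_isPendant [Nonempty V] (hA : IsCritical A) :
    ∃ y x c, y ≠ x ∧ IsPendant A y x c := by
  by_contra! hnp
  have key : ∀ n x S c, IsSplit A {x}ᶜ S c → S.card ≠ n := by
    intro n
    induction n using Nat.strong_induction_on with
    | _ n ih =>
      rintro x S c hS rfl
      obtain ⟨y, P, d, hP, hlt⟩ := hA.exists_isSplit_card_lt hnp hS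
      exact ih _ hlt y P d hP rfl
  obtain ⟨S, c, hS⟩ := hA.exists_isSplit (Classical.arbitrary V)
  exact key _ _ S c hS rfl

theorem card_lt_five (hA : IsCritical A) : Fintype.card V < 5 := by
  by_contra! hcard
  have : Nonempty V := Fintype.card_pos_iff.1 (by omega)
  obtain ⟨y, x, c, hyx, hp⟩ := hA.exists_isPendant
  exact hA.false_of_isPendant hcard hp hyx

end InvolutiveNeg

end IsCritical

end

theorem exists_inseparable_vertex_deleted_general {V K : Type*} [Fintype V] [DecidableEq V] [Field K]
    (A : Matrix V V K) (hskew : Aᵀ = -A)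
    (hcard : 5 ≤ Fintype.card V)
    (hins : ¬ SeparableIn A Finset.univ) :
    ∃ x : V, ¬ SeparableIn A ({x}ᶜ) := by
  by_contra! hsep
  have skew : ∀ i j, A i j = -A j i := fun i j => by simpa using congr_fun₂ hskew j i
  have hA : IsCritical A :=
    ⟨skew, fun S c h => hins ((separableIn_iff_exists_isSplit skew).2 ⟨S, c, h⟩),
      fun x => (separableIn_iff_exists_isSplit skew).1 (hsep x)⟩
  exact hA.card_lt_five.not_ge hcard

theorem exists_inseparable_vertex_deleted {V K : Type*} [Fintype V] [DecidableEq V] [Field K]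
    (hchar : (2 : K) ≠ 0)
    (A : Matrix V V K) (hskew : Aᵀ = -A)
    (hcard : 5 ≤ Fintype.card V)
    (hins : ¬ SeparableIn A Finset.univ) :
    ∃ x : V, ¬ SeparableIn A ({x}ᶜ) :=
  exists_inseparable_vertex_deleted_general A hskew hcard hins
end

section
/- Let V = {i,j,k} and A, B two dense skew-symmetric 3×3 matrices over a field of characteristic ≠ 2 with a_{ij} = b_{ij}, a_{ki} = b_{ik}, and a_{kj} = b_{jk}. If det(A^∞) = det(B^∞), then a_{ik} = a_{jk} and b_{ik} = b_{jk}. -/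
open Matrix

/-- The bordered matrix `A^∞`, indexed by `Option V` where `none` plays the role of `∞`. -/
def border {V K : Type*} [Zero K] [One K] [Neg K] (A : Matrix V V K) :
    Matrix (Option V) (Option V) K :=
  fun i j =>
    match i, j with
    | none, none => 0
    | none, some _ => 1
    | some _, none => -1
    | some a, some b => A a b

private theorem det_fin_four' {K : Type*} [CommRing K] (M : Matrix (Fin 4) (Fin 4) K) :
    M.det =
      M 0 0 * M 1 1 * M 2 2 * M 3 3 - M 0 0 * M 1 1 * M 2 3 * M 3 2 -
        M 0 0 * M 1 2 * M 2 1 * M 3 3 + M 0 0 * M 1 2 * M 2 3 * M 3 1 +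
        M 0 0 * M 1 3 * M 2 1 * M 3 2 - M 0 0 * M 1 3 * M 2 2 * M 3 1 -
        M 0 1 * M 1 0 * M 2 2 * M 3 3 + M 0 1 * M 1 0 * M 2 3 * M 3 2 +
        M 0 1 * M 1 2 * M 2 0 * M 3 3 - M 0 1 * M 1 2 * M 2 3 * M 3 0 -
        M 0 1 * M 1 3 * M 2 0 * M 3 2 + M 0 1 * M 1 3 * M 2 2 * M 3 0 +
        M 0 2 * M 1 0 * M 2 1 * M 3 3 - M 0 2 * M 1 0 * M 2 3 * M 3 1 -
        M 0 2 * M 1 1 * M 2 0 * M 3 3 + M 0 2 * M 1 1 * M 2 3 * M 3 0 +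
        M 0 2 * M 1 3 * M 2 0 * M 3 1 - M 0 2 * M 1 3 * M 2 1 * M 3 0 -
        M 0 3 * M 1 0 * M 2 1 * M 3 2 + M 0 3 * M 1 0 * M 2 2 * M 3 1 +
        M 0 3 * M 1 1 * M 2 0 * M 3 2 - M 0 3 * M 1 1 * M 2 2 * M 3 0 -
        M 0 3 * M 1 2 * M 2 0 * M 3 1 + M 0 3 * M 1 2 * M 2 1 * M 3 0 := by
  rw [Matrix.det_succ_row_zero]
  simp [Fin.sum_univ_succ, Matrix.det_fin_three, Fin.succAbove,
    show (Fin.succ 2 : Fin 4) = 3 from rfl, show (Fin.castSucc 2 : Fin 4) = 2 from rfl,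
    show ((1:Fin 4) < 3) = True from by decide]
  ring

theorem dense_skew_three_points {K : Type*} [Field K] (hchar : (2 : K) ≠ 0)
    (A B : Matrix (Fin 3) (Fin 3) K)
    (hAskew : Aᵀ = -A) (hBskew : Bᵀ = -B)
    (hAdense : ∀ x y : Fin 3, x ≠ y → A x y ≠ 0)
    (hBdense : ∀ x y : Fin 3, x ≠ y → B x y ≠ 0)
    (h1 : A 0 1 = B 0 1) (h2 : A 2 0 = B 0 2) (h3 : A 2 1 = B 1 2)
    (hdet : (border A).det = (border B).det) :
    A 0 2 = A 1 2 ∧ B 0 2 = B 1 2 := by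
  have hAs : ∀ x y, A y x = - A x y := by
    intro x y
    have := congrFun (congrFun hAskew x) y
    simpa [Matrix.transpose_apply] using this
  have hBs : ∀ x y, B y x = - B x y := by
    intro x y
    have := congrFun (congrFun hBskew x) y
    simpa [Matrix.transpose_apply] using this
  have hAd : ∀ x, A x x = 0 := by
    intro x
    have h := hAs x x
    have h2' : (2:K) * A x x = 0 := by linear_combination h
    exact (mul_eq_zero.mp h2').resolve_left hchar
  have hBd : ∀ x, B x x = 0 := by
    intro x
    have h := hBs x x
    have h2' : (2:K) * B x x = 0 := by linear_combination h
    exact (mul_eq_zero.mp h2').resolve_left hchar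
  have hb1 : B 0 1 = A 0 1 := h1.symm
  have hb2 : B 0 2 = -A 0 2 := by rw [← h2, hAs 0 2]
  have hb3 : B 1 2 = -A 1 2 := by rw [← h3, hAs 1 2]
  have hdA : (border A).det = (0:K) * A 0 0 * A 1 1 * A 2 2 - (0:K) * A 0 0 * A 1 2 * A 2 1 - (0:K) * A 0 1 * A 1 0 * A 2 2 + (0:K) * A 0 1 * A 1 2 * A 2 0 + (0:K) * A 0 2 * A 1 0 * A 2 1 - (0:K) * A 0 2 * A 1 1 * A 2 0 - 1 * (-1) * A 1 1 * A 2 2 + 1 * (-1) * A 1 2 * A 2 1 + 1 * A 0 1 * (-1) * A 2 2 - 1 * A 0 1 * A 1 2 * (-1) - 1 * A 0 2 * (-1) * A 2 1 + 1 * A 0 2 * A 1 1 * (-1) + 1 * (-1) * A 1 0 * A 2 2 - 1 * (-1) * A 1 2 * A 2 0 - 1 * A 0 0 * (-1) * A 2 2 + 1 * A 0 0 * A 1 2 * (-1) + 1 * A 0 2 * (-1) * A 2 0 - 1 * A 0 2 * A 1 0 * (-1) - 1 * (-1) * A 1 0 * A 2 1 + 1 * (-1) * A 1 1 * A 2 0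 + 1 * A 0 0 * (-1) * A 2 1 - 1 * A 0 0 * A 1 1 * (-1) - 1 * A 0 1 * (-1) * A 2 0 + 1 * A 0 1 * A 1 0 * (-1) := by
    rw [← Matrix.det_submatrix_equiv_self (finSuccEquiv 3) (border A), det_fin_four']
    rfl
  have hdB : (border B).det = (0:K) * B 0 0 * B 1 1 * B 2 2 - (0:K) * B 0 0 * B 1 2 * B 2 1 - (0:K) * B 0 1 * B 1 0 * B 2 2 + (0:K) * B 0 1 * B 1 2 * B 2 0 + (0:K) * B 0 2 * B 1 0 * B 2 1 - (0:K) * B 0 2 * B 1 1 * B 2 0 - 1 * (-1) * B 1 1 * B 2 2 + 1 * (-1) * B 1 2 * B 2 1 + 1 * B 0 1 * (-1) * B 2 2 - 1 * B 0 1 * B 1 2 * (-1) - 1 * B 0 2 * (-1) * B 2 1 + 1 * B 0 2 * B 1 1 * (-1) + 1 * (-1) * B 1 0 * B 2 2 - 1 * (-1) * B 1 2 * B 2 0 - 1 * B 0 0 * (-1) * B 2 2 + 1 * B 0 0 * B 1 2 * (-1) + 1 * B 0 2 * (-1) * B 2 0 - 1 * B 0 2 * B 1 0 * (-1) - 1 *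 (-1) * B 1 0 * B 2 1 + 1 * (-1) * B 1 1 * B 2 0 + 1 * B 0 0 * (-1) * B 2 1 - 1 * B 0 0 * B 1 1 * (-1) - 1 * B 0 1 * (-1) * B 2 0 + 1 * B 0 1 * B 1 0 * (-1) := by
    rw [← Matrix.det_submatrix_equiv_self (finSuccEquiv 3) (border B), det_fin_four']
    rfl
  rw [hdA, hdB] at hdet
  rw [hAd 0, hAd 1, hAd 2, hBd 0, hBd 1, hBd 2, hAs 0 1, hAs 0 2, hAs 1 2,
    hBs 0 1, hBs 0 2, hBs 1 2, hb1, hb2, hb3] at hdet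
  have key : (4 * A 0 1) * (A 1 2 - A 0 2) = 0 := by
    linear_combination hdet
  have hne : (4 : K) * A 0 1 ≠ 0 := by
    have h4 : (4 : K) ≠ 0 := by
      intro h; apply hchar
      have h' : (2:K) * 2 = 0 := by linear_combination h
      rcases mul_eq_zero.mp h' with h'' | h'' <;> exact h''
    exact mul_ne_zero h4 (hAdense 0 1 (by decide))
  have hA : A 1 2 - A 0 2 = 0 := (mul_eq_zero.mp key).resolve_left hne
  have hmain : A 0 2 = A 1 2 := (sub_eq_zero.mp hA).symm
  refine ⟨hmain, ?_⟩
  rw [← h2, ← h3, hAs 0 2, hAs 1 2, hmain]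
end

section
/- Let V be a finite set with |V| ≥ 3 and A, B two dense skew-symmetric matrices indexed by V over a field of characteristic ≠ 2 such that the bordered matrices A^∞ and B^∞ are (≤4)-HL-equivalent. Then every equivalence class of the relation E_{A,B} is a clan of both A and B, and every equivalence class of D_{A,B} is a clan of both A and B. -/
open Matrix

/-- Principal minor of `M` indexed by the finite set `X`. -/
noncomputable def pminor {W K : Type*} [DecidableEq W] [Field K]
    (M : Matrix W W K) (X : Finset W) : K :=
  (M.submatrix (fun i : {a // a ∈ X} => (i : W)) (fun j : {a // a ∈ X} => (j : W))).det

/-- The equivalence relation `E_{A,B}` generated by the pairs where `A` and `B` agree. -/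
def Erel {V K : Type*} (A B : Matrix V V K) : V → V → Prop :=
  Relation.EqvGen (fun x y => A x y = B x y)

/-- The equivalence relation `D_{A,B}` generated by the pairs where `A` and `-B` agree. -/
def Drel {V K : Type*} [Neg K] (A B : Matrix V V K) : V → V → Prop :=
  Relation.EqvGen (fun x y => A x y = -B x y)

/-!
The 2×2 principal minors give `b_uv = ±a_uv`, and the 4×4 principal minor of `A^∞` on
`{∞, u, v, w}` is the square of the Pfaffian `a_uv - a_uw + a_vw`. If `b_pq = σ a_pq` while
`b_pz = -σ a_pz` and `b_qz = -σ a_qz` for a sign `σ`, equating the squared Pfaffians of `A` and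
`B` leaves `4 a_pq (a_pz - a_qz) = 0`, so `a_pz = a_qz` by density. Inside an `E`-class (`σ = 1`)
or a `D`-class (`σ = -1`), every vertex `z` outside the class is of the second kind with respect
to all members, so propagating along chains shows that `z` sees the whole class alike.
-/

namespace Relation.EqvGen

theorem apply_eq_of_not_eqvGen {α β : Type*} {r : α → α → Prop} {f : α → β} {z : α}
    (hf : ∀ p q, r p q → ¬EqvGen r p z → ¬EqvGen r q z → f p = f q)
    {x y : α} (hxy : EqvGen r x y) (hx : ¬EqvGen r x z) : f x = f y := by
  induction hxy with
  | rel p q hpq => exact hf p q hpq hx fun hq => hx (.trans _ _ _ (.rel _ _ hpq) hq)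
  | refl => rfl
  | symm p q hqp ih => exact (ih fun hq => hx (.trans _ _ _ (.symm _ _ hqp) hq)).symm
  | trans p q w hpq _ ih₁ ih₂ =>
    exact (ih₁ hx).trans (ih₂ fun hq => hx (.trans _ _ _ hpq hq))

end Relation.EqvGen

namespace Matrix

variable {V K : Type*} [Field K] {A : Matrix V V K}

theorem apply_swap_eq_neg_of_transpose_eq_neg (hA : Aᵀ = -A) (i j : V) : A j i = -A i j :=
  congrFun₂ hA i j

theorem apply_self_eq_zero_of_transpose_eq_neg (h2 : (2 : K) ≠ 0) (hA : Aᵀ = -A) (i : V) :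
    A i i = 0 := by
  have h : (2 : K) * A i i = 0 := by
    linear_combination apply_swap_eq_neg_of_transpose_eq_neg hA i i
  exact (mul_eq_zero.mp h).resolve_left h2

theorem isClan_of_transpose_eq_neg (hA : Aᵀ = -A) {I : Set V}
    (h : ∀ i ∈ I, ∀ j ∈ I, ∀ x ∉ I, A i x = A j x) : IsClan A I := fun i hi j hj x hx =>
  ⟨by rw [apply_swap_eq_neg_of_transpose_eq_neg hA, apply_swap_eq_neg_of_transpose_eq_neg hA j,
    h i hi j hj x hx], h i hi j hj x hx⟩

end Matrix

theorem pminor_image_eq_det {W K : Type*} [DecidableEq W] [Field K] {n : ℕ}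
    (M : Matrix W W K) {g : Fin n → W} (hg : Function.Injective g) :
    pminor M (Finset.univ.image g) = (M.submatrix g g).det := by
  let e : Fin n ≃ {a // a ∈ Finset.univ.image g} :=
    Equiv.ofBijective (fun i => ⟨g i, by simp⟩)
      ⟨fun i j h => hg (congrArg Subtype.val h), by
        rintro ⟨a, ha⟩
        obtain ⟨i, -, rfl⟩ := Finset.mem_image.mp ha
        exact ⟨i, rfl⟩⟩
  rw [pminor, ← Matrix.det_submatrix_equiv_self e]
  rfl

section Border

variable {V K : Type*} [DecidableEq V] [Field K] {A : Matrix V V K}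

theorem pminor_border_pair (h2 : (2 : K) ≠ 0) (hA : Aᵀ = -A) {u v : V} (huv : u ≠ v) :
    pminor (border A) {some u, some v} = A u v ^ 2 := by
  have hX : ({some u, some v} : Finset (Option V)) = Finset.univ.image ![some u, some v] := by
    ext x; simp [Fin.exists_fin_succ, eq_comm]
  have hM : (border A).submatrix ![some u, some v] ![some u, some v] =
      !![0, A u v; -A u v, 0] := by
    ext i j
    fin_cases i <;> fin_cases j <;>
      first
        | exact apply_self_eq_zero_of_transpose_eq_neg h2 hA _
        | exact apply_swap_eq_neg_of_transpose_eq_neg hA _ _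
        | rfl
  have hinj : Function.Injective ![some u, some v] := by
    intro i j h; fin_cases i <;> fin_cases j <;> simp_all [eq_comm]
  rw [hX, pminor_image_eq_det _ hinj, hM, Matrix.det_fin_two_of]
  ring

theorem pminor_border_triple (h2 : (2 : K) ≠ 0) (hA : Aᵀ = -A) {u v w : V}
    (huv : u ≠ v) (huw : u ≠ w) (hvw : v ≠ w) :
    pminor (border A) {none, some u, some v, some w} = (A u v - A u w + A v w) ^ 2 := by
  let g : Fin 4 → Option V := ![none, some u, some v, some w]
  have hX : ({none, some u, some v, some w} : Finset (Option V)) = Finset.univ.image g := by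
    ext x; simp [g, Fin.exists_fin_succ, eq_comm]
  have hM : (border A).submatrix g g =
      !![0, 1, 1, 1; -1, 0, A u v, A u w; -1, -A u v, 0, A v w; -1, -A u w, -A v w, 0] := by
    ext i j
    fin_cases i <;> fin_cases j <;>
      first
        | exact apply_self_eq_zero_of_transpose_eq_neg h2 hA _
        | exact apply_swap_eq_neg_of_transpose_eq_neg hA _ _
        | rfl
  have hinj : Function.Injective g := by
    intro i j h; fin_cases i <;> fin_cases j <;> simp_all [g, eq_comm]
  rw [hX, pminor_image_eq_det _ hinj, hM]
  simp [Matrix.det_succ_row_zero, Fin.sum_univ_succ, Fin.succAbove]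
  ring

end Border

theorem eq_of_sq_pfaffian_eq_of_sign {K : Type*} [Field K] {a b c σ : K} (h2 : (2 : K) ≠ 0)
    (hσ : σ * σ = 1) (ha : a ≠ 0)
    (h : (a - b + c) ^ 2 = (σ * a - -σ * b + -σ * c) ^ 2) : b = c := by
  have h4 : (2 * 2 * a) * (b - c) = 0 := by linear_combination (-(a + b - c) ^ 2) * hσ - h
  exact sub_eq_zero.mp ((mul_eq_zero.mp h4).resolve_left (by simp [h2, ha]))

section SignClasses

variable {V K : Type*} [Field K] {A B : Matrix V V K} {σ : K} {r : V → V → Prop}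

theorem isClan_eqvGen_of_sign (h2 : (2 : K) ≠ 0) (hσ : σ * σ = 1)
    (hA : Aᵀ = -A) (hB : Bᵀ = -B) (hAdense : ∀ x y : V, x ≠ y → A x y ≠ 0)
    (hpair : ∀ u v : V, u ≠ v → A u v ^ 2 = B u v ^ 2)
    (htriple : ∀ u v w : V, u ≠ v → u ≠ w → v ≠ w →
      (A u v - A u w + A v w) ^ 2 = (B u v - B u w + B v w) ^ 2)
    (hr : ∀ p q, r p q ↔ B p q = σ * A p q) (x : V) :
    IsClan A {y | Relation.EqvGen r x y} ∧ IsClan B {y | Relation.EqvGen r x y} := by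
  have hne {p z : V} (hpz : ¬Relation.EqvGen r p z) : p ≠ z := by
    rintro rfl; exact hpz (.refl p)
  have hflip {p z : V} (hpz : ¬Relation.EqvGen r p z) : B p z = -σ * A p z := by
    have hsq : B p z ^ 2 = (σ * A p z) ^ 2 := by
      linear_combination (-A p z ^ 2) * hσ - hpair p z (hne hpz)
    rw [neg_mul]
    exact (sq_eq_sq_iff_eq_or_eq_neg.mp hsq).resolve_left fun h => hpz (.rel _ _ ((hr p z).2 h))
  have hcol {p q z : V} (hpq : Relation.EqvGen r p q) (hpz : ¬Relation.EqvGen r p z) :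
      A p z = A q z := by
    refine Relation.EqvGen.apply_eq_of_not_eqvGen (f := (A · z)) ?_ hpq hpz
    intro p q hrpq hpz hqz
    rcases eq_or_ne p q with rfl | hpq
    · rfl
    refine eq_of_sq_pfaffian_eq_of_sign h2 hσ (hAdense p q hpq) ?_
    rw [htriple p q z hpq (hne hpz) (hne hqz), (hr p q).1 hrpq, hflip hpz, hflip hqz]
  have hout {i z : V} (hi : Relation.EqvGen r x i) (hz : ¬Relation.EqvGen r x z) :
      ¬Relation.EqvGen r i z := fun h => hz (.trans _ _ _ hi h)
  have hclassA : ∀ i ∈ {y | Relation.EqvGen r x y}, ∀ j ∈ {y | Relation.EqvGen r x y},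
      ∀ z ∉ {y | Relation.EqvGen r x y}, A i z = A j z := fun i hi j hj z hz =>
    hcol (.trans _ _ _ (.symm _ _ hi) hj) (hout hi hz)
  refine ⟨isClan_of_transpose_eq_neg hA hclassA, isClan_of_transpose_eq_neg hB ?_⟩
  intro i hi j hj z hz
  rw [hflip (hout hi hz), hflip (hout hj hz), hclassA i hi j hj z hz]

end SignClasses

theorem classes_are_clans_general {V K : Type*} [DecidableEq V] [Field K]
    (hchar : (2 : K) ≠ 0)
    (A B : Matrix V V K)
    (hAskew : Aᵀ = -A) (hBskew : Bᵀ = -B)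
    (hAdense : ∀ x y : V, x ≠ y → A x y ≠ 0)
    (hequiv : ∀ X : Finset (Option V), X.card ≤ 4 →
      pminor (border A) X = pminor (border B) X) :
    ∀ x : V,
      (IsClan A {y | Erel A B x y} ∧ IsClan B {y | Erel A B x y}) ∧
      (IsClan A {y | Drel A B x y} ∧ IsClan B {y | Drel A B x y}) := by
  have hpair : ∀ u v : V, u ≠ v → A u v ^ 2 = B u v ^ 2 := fun u v huv => by
    rw [← pminor_border_pair hchar hAskew huv, ← pminor_border_pair hchar hBskew huv]
    exact hequiv _ (Finset.card_le_two.trans (by norm_num))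
  have htriple : ∀ u v w : V, u ≠ v → u ≠ w → v ≠ w →
      (A u v - A u w + A v w) ^ 2 = (B u v - B u w + B v w) ^ 2 := fun u v w huv huw hvw => by
    rw [← pminor_border_triple hchar hAskew huv huw hvw,
      ← pminor_border_triple hchar hBskew huv huw hvw]
    exact hequiv _ Finset.card_le_four
  intro x
  exact ⟨isClan_eqvGen_of_sign hchar (one_mul 1) hAskew hBskew hAdense hpair htriple
      (fun p q => by rw [one_mul, eq_comm]) x,
    isClan_eqvGen_of_sign hchar (by norm_num : (-1 : K) * -1 = 1) hAskew hBskew hAdense hpair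
      htriple (fun p q => by rw [neg_one_mul, eq_comm, neg_eq_iff_eq_neg]) x⟩

theorem classes_are_clans {V K : Type*} [Fintype V] [DecidableEq V] [Field K]
    (hchar : (2 : K) ≠ 0) (hcard : 3 ≤ Fintype.card V)
    (A B : Matrix V V K)
    (hAskew : Aᵀ = -A) (hBskew : Bᵀ = -B)
    (hAdense : ∀ x y : V, x ≠ y → A x y ≠ 0)
    (hBdense : ∀ x y : V, x ≠ y → B x y ≠ 0)
    (hequiv : ∀ X : Finset (Option V), X.card ≤ 4 →
      pminor (border A) X = pminor (border B) X) :
    ∀ x : V,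
      (IsClan A {y | Erel A B x y} ∧ IsClan B {y | Erel A B x y}) ∧
      (IsClan A {y | Drel A B x y} ∧ IsClan B {y | Drel A B x y}) :=
  classes_are_clans_general hchar A B hAskew hBskew hAdense hequiv
end

section
/- For n ≥ 4, let A_n and B_n be the n×n symmetric matrices with a_{i,i+1} = a_{i+1,i} = b_{i,i+1} = b_{i+1,i} = 1 for 1 ≤ i ≤ n−1, a_{n,1} = a_{1,n} = 1, b_{n,1} = b_{1,n} = −1, and all other entries 0. Then det(A_n[X]) = det(B_n[X]) for every proper subset X of {1,…,n}, but det(A_n) ≠ det(B_n). -/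
/-!
Conjugating by the diagonal sign matrix that switches from `1` to `-1` at an index `k ∉ X`
negates exactly the entries of the principal submatrix on `X` that belong to edges crossing
`k`; within `X` the only such edge is the wrap-around edge `{1, n}`, so `B_n[X]` and `A_n[X]`
are similar and have the same determinant.

For the full matrices, the determinant is affine in row `1` and in row `n`, which carry the
wrap-around entries. The terms linear in them are two cofactors of the path matrix, each a
triangular minor with unit diagonal, hence equal to `(-1)^(n-1)`; the other terms are even in
the sign of the wrap-around entries. Hence `det A_n - det B_n = 4 (-1)^(n-1)`.
-/

open Matrix

theorem pminor_eq_of_eq_sign_conj {W K : Type*} [DecidableEq W] [Field K]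
    (M N : Matrix W W K) (X : Finset W) (d : W → K) (hd : ∀ i ∈ X, d i * d i = 1)
    (hN : ∀ i ∈ X, ∀ j ∈ X, N i j = d i * M i j * d j) :
    pminor N X = pminor M X := by
  let D : Matrix X X K := diagonal fun i => d i
  have hconj : N.submatrix (↑) (↑) = D * M.submatrix (↑) (↑) * D := by
    ext i j
    simp [D, hN i i.2 j j.2]
  have hD : D.det * D.det = 1 := by
    rw [det_diagonal, ← Finset.prod_mul_distrib]
    exact Finset.prod_eq_one fun i _ => hd i i.2
  rw [pminor, pminor, hconj, det_mul, det_mul]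
  linear_combination (M.submatrix (↑) (↑) : Matrix X X K).det * hD

section Determinant

variable {ι R : Type*} [DecidableEq ι] [Fintype ι] [CommRing R]

theorem det_updateRow_self_add_smul (M : Matrix ι ι R) (i : ι) (c : R) (u : ι → R) :
    det (updateRow M i (M i + c • u)) = det M + c * det (updateRow M i u) := by
  rw [det_updateRow_add, det_updateRow_smul, updateRow_eq_self]

theorem det_updateRow_updateRow_self_add_smul (M : Matrix ι ι R) {i j : ι} (hij : i ≠ j)
    (c : R) (u v : ι → R) :
    det (updateRow (updateRow M i (M i + c • u)) j (M j + c • v)) =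
      det M + c * (det (updateRow M i u) + det (updateRow M j v)) +
        c ^ 2 * det (updateRow (updateRow M i u) j v) := by
  have hj : updateRow M i (M i + c • u) j = M j := updateRow_ne hij.symm
  have hi : updateRow M j v i = M i := updateRow_ne hij
  rw [← hj, det_updateRow_self_add_smul, det_updateRow_self_add_smul,
    updateRow_comm _ hij, ← hi, det_updateRow_self_add_smul, updateRow_comm _ hij.symm]
  ring

theorem det_updateRow_single {n : ℕ} (M : Matrix (Fin (n + 1)) (Fin (n + 1)) R)
    (i j : Fin (n + 1)) :
    det (updateRow M i (Pi.single j 1)) =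
      (-1) ^ (i + j : ℕ) * det (M.submatrix i.succAbove j.succAbove) := by
  rw [det_succ_row _ i, Finset.sum_eq_single j]
  · simp [submatrix_updateRow_succAbove]
  · intro k _ hk
    simp [hk]
  · simp

end Determinant

section SignedCycle

variable {R : Type*} [CommRing R]

/-- With 0-based indices, `signedCycle n 1 = A_n`, `signedCycle n (-1) = B_n`, and
`signedCycle n 0` is the adjacency matrix of the path. -/
def signedCycle (n : ℕ) (c : R) : Matrix (Fin n) (Fin n) R :=
  of fun i j =>
    if (i : ℕ) + 1 = j ∨ (j : ℕ) + 1 = i then 1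
    else if ((i : ℕ) = n - 1 ∧ (j : ℕ) = 0) ∨ ((i : ℕ) = 0 ∧ (j : ℕ) = n - 1) then c
    else 0

theorem signedCycle_neg_apply {n : ℕ} (c : R) (k : Fin n) {i j : Fin n} (hi : i ≠ k)
    (hj : j ≠ k) :
    signedCycle n (-c) i j =
      (if i < k then 1 else -1) * signedCycle n c i j * (if j < k then 1 else -1) := by
  rw [← Fin.val_ne_iff] at hi hj
  simp only [signedCycle, of_apply, Fin.lt_def]
  split_ifs <;> first | omega | ring

theorem pminor_signedCycle_neg {K : Type*} [Field K] {n : ℕ} (c : K) {X : Finset (Fin n)}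
    (hX : X ≠ Finset.univ) : pminor (signedCycle n (-c)) X = pminor (signedCycle n c) X := by
  obtain ⟨k, hk⟩ : ∃ k, k ∉ X := by simpa [Finset.eq_univ_iff_forall] using hX
  refine pminor_eq_of_eq_sign_conj _ _ X (fun i => if i < k then 1 else -1) ?_ ?_
  · intro i _
    split_ifs <;> norm_num
  · intro i hi j hj
    exact signedCycle_neg_apply c k (ne_of_mem_of_not_mem hi hk) (ne_of_mem_of_not_mem hj hk)

theorem signedCycle_eq_updateRow {m : ℕ} (hm : 2 ≤ m) (c : R) :
    signedCycle (m + 1) c =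
      updateRow (updateRow (signedCycle (m + 1) 0) 0
          (signedCycle (m + 1) 0 0 + c • Pi.single (Fin.last m) 1))
        (Fin.last m) (signedCycle (m + 1) 0 (Fin.last m) + c • Pi.single 0 1) := by
  ext i j
  simp only [signedCycle, updateRow_apply, of_apply, Pi.add_apply, Pi.smul_apply, Pi.single_apply,
    Fin.ext_iff, Fin.val_last, Fin.val_zero, smul_eq_mul]
  split_ifs <;> first | omega | simp_all

theorem det_updateRow_signedCycle_zero_single_last (m : ℕ) :
    det (updateRow (signedCycle (m + 1) (0 : R)) 0 (Pi.single (Fin.last m) 1)) = (-1) ^ m := by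
  have htri :
      ((signedCycle (m + 1) (0 : R)).submatrix Fin.succ Fin.castSucc).IsUpperTriangular := by
    intro i j hji
    rw [id, id, Fin.lt_def] at hji
    simp only [signedCycle, submatrix_apply, of_apply, Fin.val_succ, Fin.val_castSucc]
    split_ifs <;> first | rfl | omega
  rw [det_updateRow_single, Fin.succAbove_zero, Fin.succAbove_last, det_of_isUpperTriangular htri]
  simp [signedCycle]

theorem det_updateRow_signedCycle_zero_last_single (m : ℕ) :
    det (updateRow (signedCycle (m + 1) (0 : R)) (Fin.last m) (Pi.single 0 1)) = (-1) ^ m := by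
  have htri :
      ((signedCycle (m + 1) (0 : R)).submatrix Fin.castSucc Fin.succ).IsLowerTriangular := by
    intro i j hji
    rw [OrderDual.toDual_lt_toDual, Fin.lt_def] at hji
    simp only [signedCycle, submatrix_apply, of_apply, Fin.val_succ, Fin.val_castSucc]
    split_ifs <;> first | rfl | omega
  rw [det_updateRow_single, Fin.succAbove_zero, Fin.succAbove_last,
    det_of_isLowerTriangular _ htri]
  simp [signedCycle]

theorem det_signedCycle_sub_det_signedCycle_neg {m : ℕ} (hm : 2 ≤ m) (c : R) :
    det (signedCycle (m + 1) c) - det (signedCycle (m + 1) (-c)) = 4 * c * (-1) ^ m := by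
  have h0 : (0 : Fin (m + 1)) ≠ Fin.last m := by simp [Fin.ext_iff]; omega
  rw [signedCycle_eq_updateRow hm c, signedCycle_eq_updateRow hm (-c),
    det_updateRow_updateRow_self_add_smul _ h0, det_updateRow_updateRow_self_add_smul _ h0,
    det_updateRow_signedCycle_zero_single_last, det_updateRow_signedCycle_zero_last_single]
  ring

end SignedCycle

theorem symmetric_cycle_example (n : ℕ) (hn : 4 ≤ n)
    (A B : Matrix (Fin n) (Fin n) ℚ)
    (hA : ∀ i j : Fin n, A i j =
      if (i : ℕ) + 1 = (j : ℕ) ∨ (j : ℕ) + 1 = (i : ℕ) then 1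
      else if ((i : ℕ) = n - 1 ∧ (j : ℕ) = 0) ∨ ((i : ℕ) = 0 ∧ (j : ℕ) = n - 1) then 1
      else 0)
    (hB : ∀ i j : Fin n, B i j =
      if (i : ℕ) + 1 = (j : ℕ) ∨ (j : ℕ) + 1 = (i : ℕ) then 1
      else if ((i : ℕ) = n - 1 ∧ (j : ℕ) = 0) ∨ ((i : ℕ) = 0 ∧ (j : ℕ) = n - 1) then -1
      else 0) :
    (∀ X : Finset (Fin n), X ≠ Finset.univ → pminor A X = pminor B X) ∧
    A.det ≠ B.det := by
  obtain rfl : A = signedCycle n 1 := by ext i j; exact hA i j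
  obtain rfl : B = signedCycle n (-1) := by ext i j; exact hB i j
  refine ⟨fun X hX => (pminor_signedCycle_neg 1 hX).symm, fun hdet => ?_⟩
  obtain ⟨m, rfl⟩ : ∃ m, n = m + 1 := ⟨n - 1, by omega⟩
  have hdiff := det_signedCycle_sub_det_signedCycle_neg (m := m) (by omega) (1 : ℚ)
  rw [hdet, sub_self] at hdiff
  norm_num at hdiff
end

section
/- For even n ≥ 6, let A_n and B_n be the n×n skew-symmetric matrices with a_{i,i+1} = b_{i,i+1} = 1 = −a_{i+1,i} = −b_{i+1,i} for 1 ≤ i ≤ n−1, a_{n,1} = −a_{1,n} = 1, b_{1,n} = −b_{n,1} = 1, and all other entries 0. Then det(A_n[X]) = det(B_n[X]) for every proper subset X of {1,…,n}, while det(A_n) = 0 and det(B_n) = 4. -/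
open Matrix

/-- Weighted cyclic shift matrix: weight `-1` on the wrap-around edge. -/
def Qm (m : ℕ) : Matrix (Fin (m+1)) (Fin (m+1)) ℚ :=
  fun i j => if j = i + 1 then (if (i:ℕ) = m then -1 else 1) else 0

lemma fin_add_one_iff {m : ℕ} (i j : Fin (m+1)) :
    (j = i + 1) ↔ ((i:ℕ) + 1 = (j:ℕ) ∨ ((i:ℕ) = m ∧ (j:ℕ) = 0)) := by
  rw [Fin.ext_iff, Fin.val_add_one]
  have hi := i.isLt
  have hj := j.isLt
  have hlast : (i = Fin.last m) ↔ (i:ℕ) = m := by rw [Fin.ext_iff]; simp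
  split_ifs with h
  · rw [hlast] at h; omega
  · rw [hlast] at h; omega

lemma qdet (m : ℕ) (hm : 1 ≤ m) (c : ℚ) :
    (Qm m + c • (1 : Matrix (Fin (m+1)) (Fin (m+1)) ℚ)).det = c^(m+1) + (-1)^(m+1) := by
  set M : Matrix (Fin (m+1)) (Fin (m+1)) ℚ := Qm m + c • 1 with hM
  have hMe : ∀ i j, M i j = (if j = i + 1 then (if (i:ℕ) = m then -1 else 1) else 0)
      + (if i = j then c else 0) := by
    intro i j
    simp [hM, Qm, Matrix.one_apply, mul_comm]
  rw [Matrix.det_succ_column_zero]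
  have key : ∀ i : Fin (m+1),
      (-1 : ℚ) ^ (i:ℕ) * M i 0 * (M.submatrix i.succAbove Fin.succ).det
      = (if i = 0 then c^(m+1) else 0) + (if i = Fin.last m then (-1 : ℚ)^(m+1) else 0) := by
    intro i
    by_cases h0 : i = 0
    · subst h0
      have hne : (0 : Fin (m+1)) ≠ Fin.last m := by
        simp only [ne_eq, Fin.ext_iff, Fin.val_zero, Fin.val_last]; omega
      rw [if_pos rfl, if_neg hne]
      have hM00 : M 0 0 = c := by
        rw [hMe, if_neg (by rw [fin_add_one_iff]; simp; omega), if_pos rfl]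
        ring
      have hminor : (M.submatrix (Fin.succAbove 0) Fin.succ).det = c ^ m := by
        rw [Fin.succAbove_zero]
        have htri : (M.submatrix Fin.succ Fin.succ).BlockTriangular id := by
          intro a b hab
          simp only [Matrix.submatrix_apply, id] at hab ⊢
          rw [hMe]
          have h1 : ¬ ((b.succ : Fin (m+1)) = a.succ + 1) := by
            rw [fin_add_one_iff]
            simp [Fin.val_succ]
            omega
          have h2 : a.succ ≠ b.succ := by
            simp [Fin.ext_iff, Fin.val_succ]; omega
          rw [if_neg h1, if_neg h2]; ring
        rw [Matrix.det_of_upperTriangular htri]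
        have : ∀ a : Fin m, (M.submatrix Fin.succ Fin.succ) a a = c := by
          intro a
          simp only [Matrix.submatrix_apply]
          rw [hMe, if_pos rfl, if_neg]
          · ring
          · rw [fin_add_one_iff]
            simp only [Fin.val_succ]; omega
        rw [Finset.prod_congr rfl (fun a _ => this a)]
        simp
      rw [hM00, hminor]
      simp [pow_succ, mul_comm]
    · by_cases hl : i = Fin.last m
      · subst hl
        rw [if_neg (by simp only [Fin.ext_iff, Fin.val_zero, Fin.val_last]; omega), if_pos rfl]
        have hMl0 : M (Fin.last m) 0 = -1 := by
          rw [hMe, if_pos (by rw [fin_add_one_iff]; simp),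
            if_pos (by simp), if_neg (by simp only [Fin.ext_iff, Fin.val_zero, Fin.val_last]; omega)]
          ring
        have hminor : (M.submatrix (Fin.succAbove (Fin.last m)) Fin.succ).det = 1 := by
          rw [Fin.succAbove_last]
          have htri : (M.submatrix Fin.castSucc Fin.succ).BlockTriangular OrderDual.toDual := by
            intro a b hab
            simp only [OrderDual.toDual_lt_toDual, Matrix.submatrix_apply] at hab ⊢
            rw [hMe]
            have h1 : ¬ ((b.succ : Fin (m+1)) = a.castSucc + 1) := by
              rw [fin_add_one_iff]
              simp [Fin.val_succ, Fin.coe_castSucc]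
              omega
            have h2 : (a.castSucc : Fin (m+1)) ≠ b.succ := by
              simp [Fin.ext_iff, Fin.val_succ]; omega
            rw [if_neg h1, if_neg h2]; ring
          rw [Matrix.det_of_lowerTriangular _ htri]
          have : ∀ a : Fin m, (M.submatrix Fin.castSucc Fin.succ) a a = 1 := by
            intro a
            have ha := a.isLt
            simp only [Matrix.submatrix_apply]
            rw [hMe,
              if_pos (show (Fin.succ a = Fin.castSucc a + 1) by
                rw [fin_add_one_iff]; left; simp),
              if_neg (show ¬(((Fin.castSucc a : Fin (m+1)) : ℕ) = m) by
                simp only [Fin.coe_castSucc]; omega),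
              if_neg (show ¬(Fin.castSucc a = Fin.succ a) by
                simp only [Fin.ext_iff, Fin.coe_castSucc, Fin.val_succ]; omega)]
            ring
          rw [Finset.prod_congr rfl (fun a _ => this a)]
          simp
        rw [hMl0, hminor, Fin.val_last]
        ring
      · rw [if_neg h0, if_neg hl]
        have : M i 0 = 0 := by
          rw [hMe, if_neg, if_neg]
          · ring
          · exact h0
          · rw [fin_add_one_iff]
            have := i.isLt
            simp only [Fin.val_zero]
            push_neg
            constructor
            · omega
            · intro hi; exfalso; exact hl (by rw [Fin.ext_iff]; simp [hi])
        rw [this]; ring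
  rw [Finset.sum_congr rfl (fun i _ => key i)]
  rw [Finset.sum_add_distrib]
  simp

theorem skew_cycle_example (n : ℕ) (hn : 6 ≤ n) (heven : Even n)
    (A B : Matrix (Fin n) (Fin n) ℚ)
    (hA : ∀ i j : Fin n, A i j =
      if (i : ℕ) + 1 = (j : ℕ) then 1
      else if (j : ℕ) + 1 = (i : ℕ) then -1
      else if (i : ℕ) = n - 1 ∧ (j : ℕ) = 0 then 1
      else if (i : ℕ) = 0 ∧ (j : ℕ) = n - 1 then -1
      else 0)
    (hB : ∀ i j : Fin n, B i j =
      if (i : ℕ) + 1 = (j : ℕ) then 1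
      else if (j : ℕ) + 1 = (i : ℕ) then -1
      else if (i : ℕ) = n - 1 ∧ (j : ℕ) = 0 then -1
      else if (i : ℕ) = 0 ∧ (j : ℕ) = n - 1 then 1
      else 0) :
    (∀ X : Finset (Fin n), X ≠ Finset.univ → pminor A X = pminor B X) ∧
    A.det = 0 ∧ B.det = 4 := by
  obtain ⟨m, rfl⟩ : ∃ m, n = m + 1 := ⟨n - 1, by omega⟩
  have hm : 5 ≤ m := by omega
  refine ⟨?_, ?_, ?_⟩
  · -- proper principal minors agree
    intro X hX
    obtain ⟨k, hk⟩ : ∃ k, k ∉ X := by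
      by_contra h
      push_neg at h
      exact hX (Finset.eq_univ_iff_forall.mpr h)
    set s : Fin (m+1) → ℚ := fun i => if (i:ℕ) ≤ (k:ℕ) then 1 else -1 with hs
    have hsq : ∀ x, s x * s x = 1 := by
      intro x
      simp only [hs]
      split_ifs <;> norm_num
    have hBA : ∀ i ∈ X, ∀ j ∈ X, B i j = s i * A i j * s j := by
      intro i hi j hj
      have hik : (i:ℕ) ≠ (k:ℕ) := by
        intro h
        exact hk ((Fin.val_injective h.symm : k = i) ▸ hi)
      have hjk : (j:ℕ) ≠ (k:ℕ) := by
        intro h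
        exact hk ((Fin.val_injective h.symm : k = j) ▸ hj)
      have hkn := k.isLt
      have hin := i.isLt
      have hjn := j.isLt
      rw [hA, hB]
      simp only [hs]
      split_ifs <;> first | (exfalso; omega) | norm_num
    unfold pminor
    set e : {a // a ∈ X} → Fin (m+1) := fun a => (a : Fin (m+1)) with he
    have hmat : B.submatrix e e =
        Matrix.diagonal (fun a => s (e a)) * A.submatrix e e * Matrix.diagonal (fun a => s (e a)) := by
      ext a b
      rw [Matrix.mul_diagonal, Matrix.diagonal_mul]
      simp only [Matrix.submatrix_apply]
      exact hBA _ a.2 _ b.2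
    rw [hmat, Matrix.det_mul, Matrix.det_mul, Matrix.det_diagonal]
    have hprod : (∏ a, s (e a)) * (∏ a, s (e a)) = 1 := by
      rw [← Finset.prod_mul_distrib]
      exact Finset.prod_eq_one fun a _ => hsq (e a)
    rw [show (∏ a, s (e a)) * (A.submatrix e e).det * (∏ a, s (e a))
        = ((∏ a, s (e a)) * (∏ a, s (e a))) * (A.submatrix e e).det from by ring,
      hprod, one_mul]
  · -- det A = 0 : the all-ones vector is in the kernel
    rw [← Matrix.exists_mulVec_eq_zero_iff]
    refine ⟨fun _ => 1, ?_, ?_⟩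
    · intro h
      have := congrFun h 0
      norm_num at this
    · have hArow : ∀ i j : Fin (m+1), A i j =
          (if j = i + 1 then (1:ℚ) else 0) - (if j = i - 1 then (1:ℚ) else 0) := by
        intro i j
        have h2 : (j = i - 1) ↔ (i = j + 1) := by
          rw [eq_sub_iff_add_eq, eq_comm]
        have hin := i.isLt
        have hjn := j.isLt
        rw [hA]
        simp only [fin_add_one_iff, h2]
        split_ifs <;> first | (exfalso; omega) | norm_num
      funext i
      simp only [Matrix.mulVec, dotProduct, mul_one, Pi.zero_apply]
      rw [Finset.sum_congr rfl (fun j _ => hArow i j)]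
      rw [Finset.sum_sub_distrib]
      simp
  · -- det B = 4
    set Q : Matrix (Fin (m+1)) (Fin (m+1)) ℚ := Qm m with hQdef
    have hBQ : B = Q - Qᵀ := by
      ext i j
      have hin := i.isLt
      have hjn := j.isLt
      rw [hB]
      simp only [Matrix.sub_apply, Matrix.transpose_apply, hQdef, Qm]
      simp only [fin_add_one_iff]
      split_ifs <;> first | (exfalso; omega) | norm_num
    have hQQt : Q * Qᵀ = 1 := by
      ext i j
      have hterm : ∀ k : Fin (m+1), Q i k * Qᵀ k j =
          if k = i + 1 then (if k = j + 1 then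
            (if (i:ℕ) = m then (-1:ℚ) else 1) * (if (j:ℕ) = m then -1 else 1) else 0) else 0 := by
        intro k
        simp only [Matrix.transpose_apply, hQdef, Qm]
        split_ifs <;> ring
      rw [Matrix.mul_apply, Finset.sum_congr rfl (fun k _ => hterm k),
        Finset.sum_ite_eq' Finset.univ (i+1)]
      simp only [Finset.mem_univ, if_true]
      by_cases hij : i = j
      · subst hij
        simp only [if_pos rfl, Matrix.one_apply_eq]
        split_ifs <;> norm_num
      · have hne : (i : Fin (m+1)) + 1 ≠ j + 1 := fun h => hij (add_right_cancel h)
        rw [if_neg hne, Matrix.one_apply_ne hij]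
    have hQtQ : Qᵀ * Q = 1 := mul_eq_one_comm.mp hQQt
    have e1 : Q + (1:ℚ) • 1 = Q + 1 := by rw [one_smul]
    have e2 : Q + (-1:ℚ) • 1 = Q - 1 := by rw [neg_smul, one_smul, sub_eq_add_neg]
    have hfact : B * Q = (Q + (-1:ℚ) • 1) * (Q + (1:ℚ) • 1) := by
      rw [hBQ, sub_mul, hQtQ, e1, e2]
      noncomm_ring
    have heven' : Even (m + 1) := heven
    have hneg : ((-1:ℚ)) ^ (m+1) = 1 := heven'.neg_one_pow
    have hd1 : (Q + (1:ℚ) • 1).det = 2 := by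
      rw [hQdef, qdet m (by omega) 1, hneg]
      norm_num
    have hd2 : (Q + (-1:ℚ) • 1).det = 2 := by
      rw [hQdef, qdet m (by omega) (-1)]
      rw [show ((-1:ℚ))^(m+1) = 1 from hneg]
      norm_num
    have hdq : Q.det = 1 := by
      have := qdet m (by omega) 0
      rw [zero_smul, add_zero, zero_pow (by omega : m + 1 ≠ 0), zero_add, hneg] at this
      rw [hQdef]
      exact this
    have hmain : B.det * Q.det = 4 := by
      rw [← Matrix.det_mul, hfact, Matrix.det_mul, hd1, hd2]
      norm_num
    rw [hdq, mul_one] at hmain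
    exact hmain
end

section
/- Let A = (a_{ij}) be a skew-symmetric matrix indexed by V over a field of characteristic ≠ 2, let X be a nontrivial HL-clan of A, and define B = (b_{ij}) by b_{ij} = −a_{ij} if both i,j ∈ X, and b_{ij} = a_{ij} otherwise. Then det(A[Y]) = det(B[Y]) for every subset Y of V. -/
open Matrix

/-!
Split `Y` into `Y ∩ X` and `Y \ X`. Since `X` is an HL-clan of the skew-symmetric `A`,
`A[X, V \ X] = u vᵀ` and `A[V \ X, X] = -v uᵀ`, so `A[Y]` has the block form
`[[S, u vᵀ], [-v uᵀ, T]]` and `B[Y]` is the same matrix with `S` replaced by `-S = Sᵀ`.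
A block matrix `[[S, u vᵀ], [w uᵀ, T]]` has determinant
`det S * det T - (uᵀ adj(S) u) * (vᵀ adj(T) w)`, and neither `det S` nor `uᵀ adj(S) u` changes
under `S ↦ Sᵀ`.
-/

open Polynomial

namespace Matrix

variable {m n : Type*}

theorem map_vecMulVec {R R' : Type*} [NonAssocSemiring R] [NonAssocSemiring R'] (f : R →+* R')
    (a : m → R) (b : n → R) : (vecMulVec a b).map f = vecMulVec (f ∘ a) (f ∘ b) := by
  ext i j
  simp [vecMulVec_apply]

variable [DecidableEq m]

theorem map_evalRingHom_zero_X_smul_one_add_map_C {R : Type*} [CommRing R] (M : Matrix m m R) :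
    ((X : R[X]) • (1 : Matrix m m R[X]) + M.map C).map (evalRingHom 0) = M := by
  ext i j
  by_cases h : i = j <;> simp [h]

variable [Fintype m] [Fintype n] [DecidableEq n]

theorem det_map_X_smul_one_add_map_C_ne_zero {R : Type*} [CommRing R] [IsDomain R]
    (M : Matrix m m R) :
    (((X : R[X]) • (1 : Matrix m m R[X]) + M.map C).map
      (algebraMap R[X] (FractionRing R[X]))).det ≠ 0 := by
  rw [← RingHom.mapMatrix_apply, ← RingHom.map_det,
    map_ne_zero_iff _ (IsFractionRing.injective _ _)]
  exact fun h => by simpa [h] using leadingCoeff_det_X_one_add_C M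

theorem map_dotProduct_adjugate_mulVec {R R' : Type*} [CommRing R] [CommRing R'] (f : R →+* R')
    (M : Matrix m m R) (x u : m → R) :
    f (x ⬝ᵥ adjugate M *ᵥ u) = (f ∘ x) ⬝ᵥ adjugate (M.map f) *ᵥ (f ∘ u) := by
  rw [RingHom.map_dotProduct, ← RingHom.mapMatrix_apply, ← RingHom.map_adjugate]
  congr 1
  ext i
  exact RingHom.map_mulVec f _ u i

theorem map_det_fromBlocks_vecMulVec {R R' : Type*} [CommRing R] [CommRing R'] (f : R →+* R')
    (S : Matrix m m R) (T : Matrix n n R) (u x : m → R) (v w : n → R) :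
    f (fromBlocks S (vecMulVec u v) (vecMulVec w x) T).det =
      (fromBlocks (S.map f) (vecMulVec (f ∘ u) (f ∘ v)) (vecMulVec (f ∘ w) (f ∘ x))
        (T.map f)).det := by
  rw [RingHom.map_det, RingHom.mapMatrix_apply, fromBlocks_map, map_vecMulVec, map_vecMulVec]

theorem det_add_vecMulVec_of_det_ne_zero {F : Type*} [Field F] {T : Matrix n n F}
    (hT : T.det ≠ 0) (a b : n → F) :
    (T + vecMulVec a b).det = T.det + b ⬝ᵥ adjugate T *ᵥ a := by
  have hfactor : T + vecMulVec a b = T * (1 + vecMulVec (T⁻¹ *ᵥ a) b) := by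
    rw [Matrix.mul_add, Matrix.mul_one, mul_vecMulVec, mulVec_mulVec,
      mul_nonsing_inv _ (isUnit_iff_ne_zero.2 hT), one_mulVec]
  rw [hfactor, det_mul, vecMulVec_eq Unit, det_one_add_replicateCol_mul_replicateRow,
    inv_def, Ring.inverse_eq_inv', smul_mulVec, dotProduct_smul, smul_eq_mul]
  field_simp

theorem det_fromBlocks_vecMulVec_of_det_ne_zero {F : Type*} [Field F]
    {S : Matrix m m F} {T : Matrix n n F} (hS : S.det ≠ 0) (hT : T.det ≠ 0)
    (u x : m → F) (v w : n → F) :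
    (fromBlocks S (vecMulVec u v) (vecMulVec w x) T).det =
      S.det * T.det - (x ⬝ᵥ adjugate S *ᵥ u) * (v ⬝ᵥ adjugate T *ᵥ w) := by
  have : Invertible S := S.invertibleOfIsUnitDet (isUnit_iff_ne_zero.2 hS)
  have hSchur : T - vecMulVec w x * ⅟S * vecMulVec u v =
      T + vecMulVec (-(x ⬝ᵥ S⁻¹ *ᵥ u) • w) v := by
    rw [invOf_eq_nonsing_inv, vecMulVec_mul, vecMulVec_mul_vecMulVec, ← dotProduct_mulVec,
      vecMulVec_smul, smul_vecMulVec, neg_smul, sub_eq_add_neg]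
  rw [det_fromBlocks₁₁, hSchur, det_add_vecMulVec_of_det_ne_zero hT, inv_def,
    Ring.inverse_eq_inv', smul_mulVec, dotProduct_smul, smul_eq_mul, mulVec_smul, dotProduct_smul,
    smul_eq_mul]
  field_simp
  ring

/- `X • 1 + S.map C` has monic determinant, so it is invertible over the fraction field of `R[X]`,
where the Schur complement argument applies; the identity then descends to `R[X]` by injectivity
and to `R` by evaluation at `X = 0`. -/
theorem det_fromBlocks_vecMulVec {R : Type*} [CommRing R] [IsDomain R]
    (S : Matrix m m R) (T : Matrix n n R) (u x : m → R) (v w : n → R) :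
    (fromBlocks S (vecMulVec u v) (vecMulVec w x) T).det =
      S.det * T.det - (x ⬝ᵥ adjugate S *ᵥ u) * (v ⬝ᵥ adjugate T *ᵥ w) := by
  set S' : Matrix m m R[X] := (X : R[X]) • 1 + S.map C
  set T' : Matrix n n R[X] := (X : R[X]) • 1 + T.map C
  have hpoly : (fromBlocks S' (vecMulVec (C ∘ u) (C ∘ v)) (vecMulVec (C ∘ w) (C ∘ x)) T').det =
      S'.det * T'.det -
        ((C ∘ x) ⬝ᵥ adjugate S' *ᵥ (C ∘ u)) * ((C ∘ v) ⬝ᵥ adjugate T' *ᵥ (C ∘ w)) := by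
    apply IsFractionRing.injective R[X] (FractionRing R[X])
    rw [map_det_fromBlocks_vecMulVec, det_fromBlocks_vecMulVec_of_det_ne_zero
      (det_map_X_smul_one_add_map_C_ne_zero S) (det_map_X_smul_one_add_map_C_ne_zero T),
      map_sub, map_mul, map_mul, map_dotProduct_adjugate_mulVec, map_dotProduct_adjugate_mulVec,
      RingHom.map_det, RingHom.map_det]
    rfl
  have heval := congrArg (evalRingHom 0) hpoly
  rw [map_det_fromBlocks_vecMulVec, map_sub, map_mul, map_mul, map_dotProduct_adjugate_mulVec,
    map_dotProduct_adjugate_mulVec, RingHom.map_det, RingHom.map_det, RingHom.mapMatrix_apply,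
    RingHom.mapMatrix_apply, map_evalRingHom_zero_X_smul_one_add_map_C,
    map_evalRingHom_zero_X_smul_one_add_map_C] at heval
  simpa only [Function.comp_def, coe_evalRingHom, eval_C] using heval

theorem det_fromBlocks_transpose_vecMulVec {R : Type*} [CommRing R] [IsDomain R]
    (S : Matrix m m R) (T : Matrix n n R) (u : m → R) (v w : n → R) :
    (fromBlocks Sᵀ (vecMulVec u v) (vecMulVec w u) T).det =
      (fromBlocks S (vecMulVec u v) (vecMulVec w u) T).det := by
  rw [det_fromBlocks_vecMulVec, det_fromBlocks_vecMulVec, det_transpose, ← adjugate_transpose,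
    mulVec_transpose, dotProduct_comm, ← dotProduct_mulVec]

end Matrix

theorem Matrix.det_eq_of_transpose_toBlock {ι R : Type*} [Fintype ι] [DecidableEq ι]
    [CommRing R] [IsDomain R] (p : ι → Prop) [DecidablePred p] {M N : Matrix ι ι R}
    (u v w : ι → R) (hpq : ∀ i j, p i → ¬p j → M i j = u i * v j)
    (hqp : ∀ i j, ¬p i → p j → M i j = w i * u j)
    (hN : ∀ i j, N i j = if p i ∧ p j then M j i else M i j) :
    N.det = M.det := by
  have hM₁₂ : M.toBlock p (¬p ·) =
      vecMulVec (fun i : {i // p i} => u i) (fun j : {j // ¬p j} => v j) := by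
    ext i j
    simp [hpq _ _ i.2 j.2, vecMulVec_apply]
  have hM₂₁ : M.toBlock (¬p ·) p =
      vecMulVec (fun i : {i // ¬p i} => w i) (fun j : {j // p j} => u j) := by
    ext i j
    simp [hqp _ _ i.2 j.2, vecMulVec_apply]
  have hN₁₁ : N.toBlock p p = (M.toBlock p p)ᵀ := by
    ext i j
    simp [hN, i.2, j.2]
  have hN₁₂ : N.toBlock p (¬p ·) = M.toBlock p (¬p ·) := by
    ext i j
    simp [hN, j.2]
  have hN₂₁ : N.toBlock (¬p ·) p = M.toBlock (¬p ·) p := by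
    ext i j
    simp [hN, i.2]
  have hN₂₂ : N.toBlock (¬p ·) (¬p ·) = M.toBlock (¬p ·) (¬p ·) := by
    ext i j
    simp [hN, i.2]
  rw [det_toBlock N p, det_toBlock M p, hN₁₁, hN₁₂, hN₂₁, hN₂₂, hM₁₂, hM₂₁,
    det_fromBlocks_transpose_vecMulVec]

theorem Matrix.exists_eq_vecMulVec_of_rank_le_one {m n K : Type*} [Fintype n] [DecidableEq n]
    [Field K] (M : Matrix m n K) (h : M.rank ≤ 1) : ∃ u v, M = vecMulVec u v := by
  obtain ⟨u, hu⟩ := finrank_le_one_iff.mp h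
  choose v hv using fun j => hu ⟨M.mulVecLin (Pi.single j 1), LinearMap.mem_range_self _ _⟩
  refine ⟨u, v, ?_⟩
  ext i j
  simpa [vecMulVec_apply, mul_comm] using (congrFun (congrArg Subtype.val (hv j)) i).symm

theorem IsHLClan.exists_eq_mul {V K : Type*} [Fintype V] [DecidableEq V] [Field K]
    {A : Matrix V V K} {X : Finset V} (hX : IsHLClan A X) :
    ∃ u v : V → K, ∀ i j, i ∈ X → j ∉ X → A i j = u i * v j := by
  obtain ⟨u, v, huv⟩ := Matrix.exists_eq_vecMulVec_of_rank_le_one _ hX.1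
  refine ⟨fun i => if h : i ∈ X then u ⟨i, h⟩ else 0,
    fun j => if h : j ∈ Xᶜ then v ⟨j, h⟩ else 0, fun i j hi hj => ?_⟩
  have hj' : j ∈ Xᶜ := Finset.mem_compl.2 hj
  simpa [hi, hj', vecMulVec_apply] using congrFun₂ huv ⟨i, hi⟩ ⟨j, hj'⟩

theorem flip_hlclan_same_minors_general {V K : Type*} [Fintype V] [DecidableEq V] [Field K]
    (A B : Matrix V V K) (hskew : Aᵀ = -A)
    (X : Finset V) (hX : IsHLClan A X)
    (hB : ∀ i j : V, B i j = if i ∈ X ∧ j ∈ X then -A i j else A i j) :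
    ∀ Y : Finset V, pminor A Y = pminor B Y := by
  have hA : ∀ i j, A i j = -A j i := fun i j => congrFun₂ hskew j i
  obtain ⟨u, v, huv⟩ := hX.exists_eq_mul
  intro Y
  refine (Matrix.det_eq_of_transpose_toBlock (fun i : Y => (i : V) ∈ X) (fun i => u i)
    (fun j => v j) (fun j => -v j) (fun i j => huv i j) (fun i j hi hj => ?lower)
    (fun i j => ?flip)).symm
  case lower =>
    rw [hA, huv j i hj hi]
    ring
  case flip =>
    simp only [submatrix_apply, hB]
    split_ifs
    · rw [hA i, neg_neg]
    · rfl

theorem flip_hlclan_same_minors {V K : Type*} [Fintype V] [DecidableEq V] [Field K]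
    (hchar : (2 : K) ≠ 0)
    (A B : Matrix V V K) (hskew : Aᵀ = -A)
    (X : Finset V) (hX : IsHLClan A X)
    (hX2 : 2 ≤ X.card) (hX3 : X.card ≤ Fintype.card V - 2)
    (hB : ∀ i j : V, B i j = if i ∈ X ∧ j ∈ X then -A i j else A i j) :
    ∀ Y : Finset V, pminor A Y = pminor B Y :=
  flip_hlclan_same_minors_general A B hskew X hX hB
end
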